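/- arXiv:2210.06387 — 7 statements merged into one kernel-verified Lean document; each statement's English description precedes it below -/
import Mathlib

section
/- Let K : [-1,1] → ℝ ∪ {-∞} be concave on (-1,0) and on (0,1), nonincreasing on (-1,0) and nondecreasing on (0,1). Let 0 ≤ α < a < b < β ≤ 1 and p, q > 0 with p(a-α) ≥ q(β-b). Then for every t ∈ [0,α] we have p·K(t-α) + q·K(t-β) ≤ p·K(t-a) + q·K(t-b). -/
open Set

noncomputable section

/-- A kernel function: `[-1,1] → ℝ ∪ {-∞}`, real-valued and concave on `(-1,0)` and on `(0,1)`,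
extended continuously (in `EReal`) to the closed subintervals, so that the endpoint values
(in particular `K 0`) are the one-sided limits. -/
def KernelFun (K : ℝ → EReal) : Prop :=
  (∀ t, K t ≠ ⊤) ∧
  (∀ t ∈ Ioo (-1:ℝ) 0 ∪ Ioo (0:ℝ) 1, K t ≠ ⊥) ∧
  ConcaveOn ℝ (Ioo (-1:ℝ) 0) (fun t => (K t).toReal) ∧
  ConcaveOn ℝ (Ioo (0:ℝ) 1) (fun t => (K t).toReal) ∧
  ContinuousOn K (Icc (-1:ℝ) 0) ∧
  ContinuousOn K (Icc (0:ℝ) 1)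

/-- Monotonicity condition (M): nonincreasing on `(-1,0)`, nondecreasing on `(0,1)`. -/
def KMonotone (K : ℝ → EReal) : Prop :=
  AntitoneOn K (Ioo (-1:ℝ) 0) ∧ MonotoneOn K (Ioo (0:ℝ) 1)

/-- Strict monotonicity (SM): strictly decreasing on `[-1,0)`, strictly increasing on `(0,1]`. -/
def KStrictMonotone (K : ℝ → EReal) : Prop :=
  StrictAntiOn K (Ico (-1:ℝ) 0) ∧ StrictMonoOn K (Ioc (0:ℝ) 1)

/-- Strict concavity on both `(-1,0)` and `(0,1)`. -/
def KStrictConcave (K : ℝ → EReal) : Prop :=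
  StrictConcaveOn ℝ (Ioo (-1:ℝ) 0) (fun t => (K t).toReal) ∧
  StrictConcaveOn ℝ (Ioo (0:ℝ) 1) (fun t => (K t).toReal)

/-- An `n`-field function: bounded above on `[0,1]`, never `+∞`, and finite at more than `n`
points of `[0,1]`, counting the endpoints `0`, `1` with weight `1/2` only. -/
def NFieldFun (n : ℕ) (J : ℝ → EReal) : Prop :=
  (∀ t, J t ≠ ⊤) ∧
  (∃ M : ℝ, ∀ t ∈ Icc (0:ℝ) 1, J t ≤ (M : EReal)) ∧
  ((∃ S : Finset ℝ, ↑S ⊆ {t ∈ Ioo (0:ℝ) 1 | J t ≠ ⊥} ∧ n + 1 ≤ S.card) ∨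
   ((∃ S : Finset ℝ, ↑S ⊆ {t ∈ Ioo (0:ℝ) 1 | J t ≠ ⊥} ∧ n ≤ S.card) ∧
     (J 0 ≠ ⊥ ∨ J 1 ≠ ⊥)))

/-- The closed simplex: `0 ≤ x₁ ≤ ⋯ ≤ xₙ ≤ 1`. -/
def closedSimplex (n : ℕ) (x : Fin n → ℝ) : Prop :=
  (∀ i, x i ∈ Icc (0:ℝ) 1) ∧ Monotone x

/-- The open simplex: `0 < x₁ < ⋯ < xₙ < 1`. -/
def openSimplex (n : ℕ) (x : Fin n → ℝ) : Prop :=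
  (∀ i, x i ∈ Ioo (0:ℝ) 1) ∧ StrictMono x

/-- Extended node system: `x₀ = 0`, `x₁,…,xₙ`, `x_{n+1} = 1`. -/
def extNodes (n : ℕ) (x : Fin n → ℝ) : Fin (n + 2) → ℝ :=
  Fin.cons 0 (Fin.snoc x 1)

/-- The (weighted) sum of translates function `F(x,t) = J(t) + ∑ νⱼ K(t - xⱼ)`. -/
def sumTrans (n : ℕ) (ν : Fin n → ℝ) (K J : ℝ → EReal) (x : Fin n → ℝ) (t : ℝ) : EReal :=
  J t + ∑ i, (ν i : EReal) * K (t - x i)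

/-- The `j`-th interval maximum `mⱼ(x) = sup_{[xⱼ, xⱼ₊₁]} F(x,·)`. -/
def intMax (n : ℕ) (ν : Fin n → ℝ) (K J : ℝ → EReal) (x : Fin n → ℝ) (j : Fin (n + 1)) :
    EReal :=
  sSup (sumTrans n ν K J x '' Icc (extNodes n x j.castSucc) (extNodes n x j.succ))

/-- A node system is regular (nonsingular) if all interval maxima are finite. -/
def regularNodes (n : ℕ) (ν : Fin n → ℝ) (K J : ℝ → EReal) (x : Fin n → ℝ) : Prop :=
  ∀ j, intMax n ν K J x j ≠ ⊥


open Filter Topology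

lemma real_core (K : ℝ → EReal) (hK : KernelFun K) (hM : KMonotone K)
    {p q : ℝ} (hp : 0 < p) {y1 y2 y3 y4 : ℝ}
    (h1 : y1 ∈ Ioo (-1:ℝ) 0) (h4 : y4 ∈ Ioo (-1:ℝ) 0)
    (h12 : y1 < y2) (h23 : y2 < y3) (h34 : y3 < y4)
    (hκ : q * (y2 - y1) ≤ p * (y4 - y3)) :
    p * (K y4).toReal + q * (K y1).toReal ≤ p * (K y3).toReal + q * (K y2).toReal := by
  have m2 : y2 ∈ Ioo (-1:ℝ) 0 := ⟨lt_trans h1.1 h12, lt_trans (lt_trans h23 h34) h4.2⟩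
  have m3 : y3 ∈ Ioo (-1:ℝ) 0 := ⟨lt_trans m2.1 h23, lt_trans h34 h4.2⟩
  have hC : ConcaveOn ℝ (Ioo (-1:ℝ) 0) (fun u => (K u).toReal) := hK.2.2.1
  have hA : ((K y3).toReal - (K y2).toReal) / (y3 - y2)
      ≤ ((K y2).toReal - (K y1).toReal) / (y2 - y1) :=
    hC.slope_anti_adjacent h1 m3 h12 h23
  have hB : ((K y4).toReal - (K y3).toReal) / (y4 - y3)
      ≤ ((K y3).toReal - (K y2).toReal) / (y3 - y2) :=
    hC.slope_anti_adjacent m2 h4 h23 h34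
  have u1 : (0:ℝ) < y2 - y1 := by linarith
  have u2 : (0:ℝ) < y3 - y2 := by linarith
  have u3 : (0:ℝ) < y4 - y3 := by linarith
  rw [div_le_div_iff₀ u2 u1] at hA
  rw [div_le_div_iff₀ u3 u2] at hB
  have hmono : (K y2).toReal ≤ (K y1).toReal :=
    EReal.toReal_le_toReal (hM.1 h1 m2 h12.le) (hK.2.1 y2 (Set.mem_union_left _ m2)) (hK.1 y1)
  have F1 := mul_le_mul_of_nonneg_left hB (le_of_lt (mul_pos hp u1))
  have F2 := mul_le_mul_of_nonneg_left hA (le_of_lt (mul_pos hp u3))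
  have hnp : ((K y2).toReal - (K y1).toReal) * (y3 - y2) ≤ 0 :=
    mul_nonpos_of_nonpos_of_nonneg (by linarith) u2.le
  have F3 := mul_le_mul_of_nonpos_right hκ hnp
  nlinarith [F1, F2, F3, mul_pos u1 u2]

set_option maxHeartbeats 1000000 in
/-- Lemma (widening, part (a)): monotone kernel, `p(a-α) ≥ q(β-b)`, inequality on `[0,α]`. -/
theorem widening_left (K : ℝ → EReal) (hK : KernelFun K) (hM : KMonotone K)
    (α a b β p q : ℝ) (h0 : 0 ≤ α) (h1 : α < a) (h2 : a < b) (h3 : b < β) (h4 : β ≤ 1)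
    (hp : 0 < p) (hq : 0 < q) (hκ : q * (β - b) ≤ p * (a - α)) :
    ∀ t ∈ Icc (0:ℝ) α,
      (p : EReal) * K (t - α) + (q : EReal) * K (t - β) ≤
        (p : EReal) * K (t - a) + (q : EReal) * K (t - b) := by
  intro t ht
  obtain ⟨ht0, htα⟩ := ht
  by_cases hb4 : K (t - α) = ⊥
  · rw [hb4, EReal.coe_mul_bot_of_pos hp, EReal.bot_add]; exact bot_le
  by_cases hb1 : K (t - β) = ⊥
  · rw [hb1, EReal.coe_mul_bot_of_pos hq, EReal.add_bot]; exact bot_le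
  have hT := hK.1
  have m2 : t - b ∈ Ioo (-1:ℝ) 0 := ⟨by linarith, by linarith⟩
  have m3 : t - a ∈ Ioo (-1:ℝ) 0 := ⟨by linarith, by linarith⟩
  have nb2 : K (t - b) ≠ ⊥ := hK.2.1 _ (Set.mem_union_left _ m2)
  have nb3 : K (t - a) ≠ ⊥ := hK.2.1 _ (Set.mem_union_left _ m3)
  have hx1l : (-1:ℝ) ≤ t - β := by linarith
  have hx4r : t - α ≤ 0 := by linarith
  have hcont : ContinuousOn K (Icc (-1:ℝ) 0) := hK.2.2.2.2.1
  have key : p * (K (t - α)).toReal + q * (K (t - β)).toReal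
      ≤ p * (K (t - a)).toReal + q * (K (t - b)).toReal := by
    set x1 := t - β with hx1
    set x2 := t - b with hx2
    set x3 := t - a with hx3
    set x4 := t - α with hx4
    have h12 : x1 < x2 := by simp only [hx1, hx2]; linarith
    have h23 : x2 < x3 := by simp only [hx2, hx3]; linarith
    have h34 : x3 < x4 := by simp only [hx3, hx4]; linarith
    have hIoo01 : Ioo (0:ℝ) 1 ∈ 𝓝[>] (0:ℝ) :=
      Ioo_mem_nhdsGT_of_mem ⟨le_refl 0, one_pos⟩
    have hmemu : ∀ s ∈ Ioo (0:ℝ) 1,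
        x1 < x1 + s * (x2 - x1) ∧ x1 + s * (x2 - x1) < x2 := fun s hs =>
      ⟨by nlinarith [mul_pos hs.1 (sub_pos.2 h12)],
       by nlinarith [mul_pos (sub_pos.2 hs.2) (sub_pos.2 h12)]⟩
    have hmemv : ∀ s ∈ Ioo (0:ℝ) 1,
        x3 < x4 - s * (x4 - x3) ∧ x4 - s * (x4 - x3) < x4 := fun s hs =>
      ⟨by nlinarith [mul_pos (sub_pos.2 hs.2) (sub_pos.2 h34)],
       by nlinarith [mul_pos hs.1 (sub_pos.2 h34)]⟩
    have hstep : ∀ s ∈ Ioo (0:ℝ) 1,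
        p * (K (x4 - s * (x4 - x3))).toReal + q * (K (x1 + s * (x2 - x1))).toReal
          ≤ p * (K x3).toReal + q * (K x2).toReal := by
      intro s hs
      obtain ⟨hu1, hu2⟩ := hmemu s hs
      obtain ⟨hv1, hv2⟩ := hmemv s hs
      have hy1 : x1 + s * (x2 - x1) ∈ Ioo (-1:ℝ) 0 :=
        ⟨by linarith, by linarith [m2.2]⟩
      have hy4 : x4 - s * (x4 - x3) ∈ Ioo (-1:ℝ) 0 :=
        ⟨by linarith [m3.1], by linarith⟩
      have hκ' : q * (x2 - (x1 + s * (x2 - x1))) ≤ p * ((x4 - s * (x4 - x3)) - x3) := by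
        have hb' : x2 - x1 = β - b := by simp only [hx1, hx2]; ring
        have ha' : x4 - x3 = a - α := by simp only [hx3, hx4]; ring
        have e1 : x2 - (x1 + s * (x2 - x1)) = (1 - s) * (β - b) := by rw [← hb']; ring
        have e2 : (x4 - s * (x4 - x3)) - x3 = (1 - s) * (a - α) := by rw [← ha']; ring
        rw [e1, e2]
        nlinarith [mul_le_mul_of_nonneg_left hκ (by linarith [hs.2] : (0:ℝ) ≤ 1 - s)]
      exact real_core K hK hM hp hy1 hy4 hu2 h23 hv1 hκ'
    have cw1 : ContinuousWithinAt K (Icc (-1:ℝ) 0) x1 := hcont x1 ⟨hx1l, by linarith⟩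
    have cw4 : ContinuousWithinAt K (Icc (-1:ℝ) 0) x4 := hcont x4 ⟨by linarith [m3.1], hx4r⟩
    have tu : Tendsto (fun s : ℝ => x1 + s * (x2 - x1)) (𝓝[>] (0:ℝ)) (𝓝 x1) := by
      have hc : Continuous (fun s : ℝ => x1 + s * (x2 - x1)) := by fun_prop
      have h0' : Tendsto (fun s : ℝ => x1 + s * (x2 - x1)) (𝓝 (0:ℝ)) (𝓝 x1) := by
        simpa using hc.tendsto 0
      exact h0'.mono_left nhdsWithin_le_nhds
    have tv : Tendsto (fun s : ℝ => x4 - s * (x4 - x3)) (𝓝[>] (0:ℝ)) (𝓝 x4) := by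
      have hc : Continuous (fun s : ℝ => x4 - s * (x4 - x3)) := by fun_prop
      have h0' : Tendsto (fun s : ℝ => x4 - s * (x4 - x3)) (𝓝 (0:ℝ)) (𝓝 x4) := by
        simpa using hc.tendsto 0
      exact h0'.mono_left nhdsWithin_le_nhds
    have tu' : Tendsto (fun s : ℝ => x1 + s * (x2 - x1)) (𝓝[>] (0:ℝ)) (𝓝[Icc (-1:ℝ) 0] x1) := by
      refine tendsto_nhdsWithin_of_tendsto_nhds_of_eventually_within _ tu ?_
      filter_upwards [hIoo01] with s hs
      obtain ⟨hu1, hu2⟩ := hmemu s hs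
      exact ⟨by linarith, by linarith [m2.2]⟩
    have tv' : Tendsto (fun s : ℝ => x4 - s * (x4 - x3)) (𝓝[>] (0:ℝ)) (𝓝[Icc (-1:ℝ) 0] x4) := by
      refine tendsto_nhdsWithin_of_tendsto_nhds_of_eventually_within _ tv ?_
      filter_upwards [hIoo01] with s hs
      obtain ⟨hv1, hv2⟩ := hmemv s hs
      exact ⟨by linarith [m3.1], by linarith⟩
    have tKu : Tendsto (fun s : ℝ => (K (x1 + s * (x2 - x1))).toReal) (𝓝[>] (0:ℝ))
        (𝓝 ((K x1).toReal)) :=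
      (EReal.tendsto_toReal (hT x1) hb1).comp (Filter.Tendsto.comp cw1 tu')
    have tKv : Tendsto (fun s : ℝ => (K (x4 - s * (x4 - x3))).toReal) (𝓝[>] (0:ℝ))
        (𝓝 ((K x4).toReal)) :=
      (EReal.tendsto_toReal (hT x4) hb4).comp (Filter.Tendsto.comp cw4 tv')
    have tend : Tendsto (fun s : ℝ =>
        p * (K (x4 - s * (x4 - x3))).toReal + q * (K (x1 + s * (x2 - x1))).toReal)
        (𝓝[>] (0:ℝ)) (𝓝 (p * (K x4).toReal + q * (K x1).toReal)) :=
      (tKv.const_mul p).add (tKu.const_mul q)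
    exact le_of_tendsto tend (eventually_of_mem hIoo01 hstep)
  rw [show K (t - α) = (((K (t - α)).toReal : ℝ) : EReal) from (EReal.coe_toReal (hT _) hb4).symm,
    show K (t - β) = (((K (t - β)).toReal : ℝ) : EReal) from (EReal.coe_toReal (hT _) hb1).symm,
    show K (t - a) = (((K (t - a)).toReal : ℝ) : EReal) from (EReal.coe_toReal (hT _) nb3).symm,
    show K (t - b) = (((K (t - b)).toReal : ℝ) : EReal) from (EReal.coe_toReal (hT _) nb2).symm]
  exact_mod_cast key
end
end

section
/- Let K : [-1,1] → ℝ ∪ {-∞} be a monotone kernel function (concave on (-1,0) and (0,1), nonincreasing on (-1,0), nondecreasing on (0,1)). Let 0 ≤ α < a < b < β ≤ 1 and p, q > 0 with p(a-α) ≤ q(β-b). Then for every t ∈ [β,1] we have p·K(t-α) + q·K(t-β) ≤ p·K(t-a) + q·K(t-b). -/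
open Set

noncomputable section

open Filter Topology in
private lemma Kmono_Icc' (K : ℝ → EReal) (hc : ContinuousOn K (Icc (0:ℝ) 1))
    (hm : MonotoneOn K (Ioo (0:ℝ) 1)) : MonotoneOn K (Icc (0:ℝ) 1) := by
  intro x hx y hy hxy
  rcases eq_or_lt_of_le hxy with rfl | hxy
  · exact le_rfl
  set u := x + (y - x) / 3 with hu
  set v := y - (y - x) / 3 with hv
  have hxu : x < u := by simp [hu]; linarith
  have huv : u < v := by simp [hu, hv]; linarith
  have hvy : v < y := by simp [hv]; linarith
  have hu01 : u ∈ Ioo (0:ℝ) 1 := ⟨lt_of_le_of_lt hx.1 hxu, lt_of_lt_of_le (huv.trans hvy) hy.2⟩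
  have hv01 : v ∈ Ioo (0:ℝ) 1 := ⟨lt_of_le_of_lt hx.1 (hxu.trans huv), lt_of_lt_of_le hvy hy.2⟩
  have step1 : K x ≤ K u := by
    rcases eq_or_lt_of_le hx.1 with h0 | h0
    · -- x = 0
      have hlim : Tendsto K (𝓝[Ioo x u] x) (𝓝 (K x)) :=
        ((hc x hx).mono (fun w hw =>
          ⟨le_of_lt (h0 ▸ hw.1), le_of_lt (lt_of_lt_of_le hw.2 hu01.2.le)⟩)).tendsto
      have hne : (𝓝[Ioo x u] x).NeBot := left_nhdsWithin_Ioo_neBot hxu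
      refine le_of_tendsto hlim ?_
      filter_upwards [self_mem_nhdsWithin] with w hw
      exact hm ⟨h0 ▸ hw.1, lt_of_lt_of_le hw.2 hu01.2.le⟩ hu01 hw.2.le
    · exact hm ⟨h0, lt_of_lt_of_le hxy hy.2⟩ hu01 hxu.le
  have step2 : K u ≤ K v := hm hu01 hv01 huv.le
  have step3 : K v ≤ K y := by
    rcases eq_or_lt_of_le hy.2 with h1 | h1
    · -- y = 1
      have hlim : Tendsto K (𝓝[Ioo v y] y) (𝓝 (K y)) :=
        ((hc y hy).mono (fun w hw =>
          ⟨le_of_lt (lt_of_le_of_lt hv01.1.le hw.1), le_of_lt (h1 ▸ hw.2)⟩)).tendsto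
      have hne : (𝓝[Ioo v y] y).NeBot := right_nhdsWithin_Ioo_neBot hvy
      refine ge_of_tendsto hlim ?_
      filter_upwards [self_mem_nhdsWithin] with w hw
      exact hm hv01 ⟨hv01.1.trans hw.1, h1 ▸ hw.2⟩ hw.1.le
    · exact hm hv01 ⟨hv01.1.trans hvy, h1⟩ hvy.le
  exact step1.trans (step2.trans step3)

open Filter Topology in
private lemma slope_left' (K : ℝ → EReal) (htop : ∀ t, K t ≠ ⊤)
    (hc : ContinuousOn K (Icc (0:ℝ) 1))
    (hconc : ConcaveOn ℝ (Ioo (0:ℝ) 1) (fun t => (K t).toReal))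
    {x1 x2 x3 : ℝ} (h1 : 0 ≤ x1) (h2 : x2 ∈ Ioo (0:ℝ) 1) (h3 : x3 ∈ Ioo (0:ℝ) 1)
    (h12 : x1 < x2) (h23 : x2 < x3) (hbot : K x1 ≠ ⊥) :
    ((K x3).toReal - (K x2).toReal) / (x3 - x2)
      ≤ ((K x2).toReal - (K x1).toReal) / (x2 - x1) := by
  rcases h1.lt_or_eq with h0 | h0
  · exact hconc.slope_anti_adjacent ⟨h0, h12.trans h2.2⟩ h3 h12 h23
  · subst h0
    have hKlim : Tendsto K (𝓝[Ioo (0:ℝ) x2] 0) (𝓝 (K 0)) :=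
      ((hc 0 ⟨le_rfl, zero_le_one⟩).mono
        (fun w hw => ⟨hw.1.le, hw.2.le.trans h2.2.le⟩)).tendsto
    have hglim : Tendsto (fun w => (K w).toReal) (𝓝[Ioo (0:ℝ) x2] 0) (𝓝 ((K 0).toReal)) :=
      (EReal.tendsto_toReal (htop 0) hbot).comp hKlim
    have hdlim : Tendsto (fun w : ℝ => x2 - w) (𝓝[Ioo (0:ℝ) x2] 0) (𝓝 (x2 - 0)) :=
      (tendsto_const_nhds.sub (continuous_id.tendsto 0)).mono_left nhdsWithin_le_nhds
    have hdiv : Tendsto (fun w => ((K x2).toReal - (K w).toReal) / (x2 - w))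
        (𝓝[Ioo (0:ℝ) x2] 0) (𝓝 (((K x2).toReal - (K 0).toReal) / (x2 - 0))) :=
      (tendsto_const_nhds.sub hglim).div hdlim (by simpa using h2.1.ne')
    have hne : (𝓝[Ioo (0:ℝ) x2] 0).NeBot := left_nhdsWithin_Ioo_neBot h2.1
    refine ge_of_tendsto hdiv ?_
    filter_upwards [self_mem_nhdsWithin] with w hw
    exact hconc.slope_anti_adjacent ⟨hw.1, hw.2.trans h2.2⟩ h3 hw.2 h23

open Filter Topology in
private lemma slope_right' (K : ℝ → EReal) (htop : ∀ t, K t ≠ ⊤)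
    (hc : ContinuousOn K (Icc (0:ℝ) 1))
    (hconc : ConcaveOn ℝ (Ioo (0:ℝ) 1) (fun t => (K t).toReal))
    {x2 x3 x4 : ℝ} (h2 : x2 ∈ Ioo (0:ℝ) 1) (h3 : x3 ∈ Ioo (0:ℝ) 1) (h4 : x4 ≤ 1)
    (h23 : x2 < x3) (h34 : x3 < x4) (hbot : K x4 ≠ ⊥) :
    ((K x4).toReal - (K x3).toReal) / (x4 - x3)
      ≤ ((K x3).toReal - (K x2).toReal) / (x3 - x2) := by
  rcases h4.lt_or_eq with h0 | h0
  · exact hconc.slope_anti_adjacent h2 ⟨h2.1.trans (h23.trans h34), h0⟩ h23 h34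
  · subst h0
    have hKlim : Tendsto K (𝓝[Ioo x3 1] 1) (𝓝 (K 1)) :=
      ((hc 1 ⟨zero_le_one, le_rfl⟩).mono
        (fun w hw => ⟨(h3.1.trans hw.1).le, hw.2.le⟩)).tendsto
    have hglim : Tendsto (fun w => (K w).toReal) (𝓝[Ioo x3 1] 1) (𝓝 ((K 1).toReal)) :=
      (EReal.tendsto_toReal (htop 1) hbot).comp hKlim
    have hdlim : Tendsto (fun w : ℝ => w - x3) (𝓝[Ioo x3 1] 1) (𝓝 (1 - x3)) :=
      ((continuous_id.tendsto 1).sub tendsto_const_nhds).mono_left nhdsWithin_le_nhds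
    have hdiv : Tendsto (fun w => ((K w).toReal - (K x3).toReal) / (w - x3))
        (𝓝[Ioo x3 1] 1) (𝓝 (((K 1).toReal - (K x3).toReal) / (1 - x3))) :=
      (hglim.sub tendsto_const_nhds).div hdlim (sub_ne_zero.mpr h3.2.ne')
    have hne : (𝓝[Ioo x3 1] 1).NeBot := right_nhdsWithin_Ioo_neBot h3.2
    refine le_of_tendsto hdiv ?_
    filter_upwards [self_mem_nhdsWithin] with w hw
    exact hconc.slope_anti_adjacent h2 ⟨h2.1.trans (h23.trans hw.1), hw.2⟩ h23 hw.1
/-- Lemma (widening, part (b)): monotone kernel, `p(a-α) ≤ q(β-b)`, inequality on `[β,1]`. -/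
theorem widening_right (K : ℝ → EReal) (hK : KernelFun K) (hM : KMonotone K)
    (α a b β p q : ℝ) (h0 : 0 ≤ α) (h1 : α < a) (h2 : a < b) (h3 : b < β) (h4 : β ≤ 1)
    (hp : 0 < p) (hq : 0 < q) (hκ : p * (a - α) ≤ q * (β - b)) :
    ∀ t ∈ Icc β (1:ℝ),
      (p : EReal) * K (t - α) + (q : EReal) * K (t - β) ≤
        (p : EReal) * K (t - a) + (q : EReal) * K (t - b) := by
  obtain ⟨htop, hbotIoo, hconc1, hconc2, hcont1, hcont2⟩ := hK
  obtain ⟨hanti, hmono⟩ := hM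
  intro t ht
  obtain ⟨htβ, ht1⟩ := ht
  have ha0 : 0 < a := lt_of_le_of_lt h0 h1
  have hb0 : 0 < b := ha0.trans h2
  have hx2 : t - b ∈ Ioo (0:ℝ) 1 := ⟨by linarith, by linarith⟩
  have hx3 : t - a ∈ Ioo (0:ℝ) 1 := ⟨by linarith, by linarith⟩
  have hx1 : 0 ≤ t - β := by linarith
  have hx4 : t - α ≤ 1 := by linarith
  by_cases hbot1 : K (t - β) = ⊥
  · rw [hbot1, EReal.coe_mul_bot_of_pos hq, EReal.add_bot]
    exact bot_le
  · have hmIcc : MonotoneOn K (Icc (0:ℝ) 1) := Kmono_Icc' K hcont2 hmono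
    have hK21 : K (t - β) ≤ K (t - b) :=
      hmIcc ⟨hx1, by linarith⟩ ⟨hx2.1.le, hx2.2.le⟩ (by linarith)
    have hK32 : K (t - b) ≤ K (t - a) :=
      hmIcc ⟨hx2.1.le, hx2.2.le⟩ ⟨hx3.1.le, hx3.2.le⟩ (by linarith)
    have hK43 : K (t - a) ≤ K (t - α) :=
      hmIcc ⟨hx3.1.le, hx3.2.le⟩ ⟨by linarith, hx4⟩ (by linarith)
    have hbot2 : K (t - b) ≠ ⊥ := ((Ne.bot_lt hbot1).trans_le hK21).ne'
    have hbot3 : K (t - a) ≠ ⊥ := ((Ne.bot_lt hbot2).trans_le hK32).ne'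
    have hbot4 : K (t - α) ≠ ⊥ := ((Ne.bot_lt hbot3).trans_le hK43).ne'
    have s34 := slope_right' K htop hcont2 hconc2 hx2 hx3 hx4 (by linarith) (by linarith) hbot4
    have s23 := slope_left' K htop hcont2 hconc2 hx1 hx2 hx3 (by linarith) (by linarith) hbot1
    have key : ((K (t - α)).toReal - (K (t - a)).toReal) * (β - b)
        ≤ ((K (t - b)).toReal - (K (t - β)).toReal) * (a - α) := by
      have h := s34.trans s23
      rw [div_le_div_iff₀ (by linarith) (by linarith)] at h
      linear_combination h
    have hB : 0 ≤ (K (t - b)).toReal - (K (t - β)).toReal := by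
      have := EReal.toReal_le_toReal hK21 hbot1 (htop _)
      linarith
    rw [show K (t - α) = (((K (t - α)).toReal : ℝ) : EReal) from (EReal.coe_toReal (htop _) hbot4).symm,
       show K (t - β) = (((K (t - β)).toReal : ℝ) : EReal) from (EReal.coe_toReal (htop _) hbot1).symm,
       show K (t - a) = (((K (t - a)).toReal : ℝ) : EReal) from (EReal.coe_toReal (htop _) hbot3).symm,
       show K (t - b) = (((K (t - b)).toReal : ℝ) : EReal) from (EReal.coe_toReal (htop _) hbot2).symm,
       ← EReal.coe_mul, ← EReal.coe_mul, ← EReal.coe_mul, ← EReal.coe_mul,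
       ← EReal.coe_add, ← EReal.coe_add, EReal.coe_le_coe_iff]
    nlinarith [mul_le_mul_of_nonneg_left key hp.le, mul_le_mul_of_nonneg_left hκ hB,
      sub_pos.mpr h3, sub_pos.mpr h1]
end
end

section
/- Let K : [-1,1] → ℝ ∪ {-∞} be a kernel function (concave on (-1,0) and on (0,1), with equal one-sided limits at 0, extended by limits to the closed interval). Let 0 ≤ α < a < b < β ≤ 1 and p, q > 0 with p(a-α) = q(β-b). Then for every t ∈ [0,α] ∪ [β,1] we have p·K(t-α) + q·K(t-β) ≤ p·K(t-a) + q·K(t-b). No monotonicity assumption on K is needed. -/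
open Set

noncomputable section

open Filter Topology

lemma lemA (f : ℝ → ℝ) (c d : ℝ) (hconc : ConcaveOn ℝ (Ioo c d) f)
    (u1 u2 u3 u4 p q : ℝ) (h1 : u1 ∈ Ioo c d) (h12 : u1 < u2) (h23 : u2 < u3)
    (h34 : u3 < u4) (h4 : u4 ∈ Ioo c d)
    (hp : 0 < p) (hq : 0 < q) (heq : p * (u4 - u3) = q * (u2 - u1)) :
    p * f u4 + q * f u1 ≤ p * f u3 + q * f u2 := by
  have h2 : u2 ∈ Ioo c d := ⟨h1.1.trans h12, h23.trans (h34.trans h4.2)⟩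
  have h3 : u3 ∈ Ioo c d := ⟨h2.1.trans h23, h34.trans h4.2⟩
  have s1 := hconc.slope_anti_adjacent h1 h3 h12 h23
  have s2 := hconc.slope_anti_adjacent h2 h4 h23 h34
  have key : (f u4 - f u3) / (u4 - u3) ≤ (f u2 - f u1) / (u2 - u1) := s2.trans s1
  have hd1 : (0:ℝ) < u2 - u1 := by linarith
  have hd2 : (0:ℝ) < u4 - u3 := by linarith
  rw [div_le_div_iff₀ hd2 hd1] at key
  have k2 : p * ((f u4 - f u3) * (u2 - u1)) ≤ (f u2 - f u1) * (q * (u2 - u1)) := by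
    rw [← heq]
    calc p * ((f u4 - f u3) * (u2 - u1)) ≤ p * ((f u2 - f u1) * (u4 - u3)) :=
          mul_le_mul_of_nonneg_left key hp.le
      _ = (f u2 - f u1) * (p * (u4 - u3)) := by ring
  nlinarith [k2, hd1]

lemma lemB (K : ℝ → EReal) (c d : ℝ)
    (htop : ∀ t, K t ≠ ⊤) (hbot : ∀ t ∈ Ioo c d, K t ≠ ⊥)
    (hconc : ConcaveOn ℝ (Ioo c d) (fun t => (K t).toReal))
    (hcont : ContinuousOn K (Icc c d))
    (u1 u2 u3 u4 p q : ℝ) (h1 : c ≤ u1) (h12 : u1 < u2) (h23 : u2 < u3)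
    (h34 : u3 < u4) (h4 : u4 ≤ d)
    (hp : 0 < p) (hq : 0 < q) (heq : p * (u4 - u3) = q * (u2 - u1)) :
    (p : EReal) * K u4 + (q : EReal) * K u1 ≤ (p : EReal) * K u3 + (q : EReal) * K u2 := by
  set f : ℝ → ℝ := fun t => (K t).toReal with hf
  have h2 : u2 ∈ Ioo c d := ⟨lt_of_le_of_lt h1 h12, lt_of_lt_of_le (h23.trans h34) h4⟩
  have h3 : u3 ∈ Ioo c d := ⟨h2.1.trans h23, lt_of_lt_of_le h34 h4⟩
  have hpq : 0 < p / q := div_pos hp hq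
  by_cases hb1 : K u1 = ⊥
  · rw [hb1, EReal.coe_mul_bot_of_pos hq, EReal.add_bot]
    exact bot_le
  by_cases hb4 : K u4 = ⊥
  · rw [hb4, EReal.coe_mul_bot_of_pos hp, EReal.bot_add]
    exact bot_le
  -- all four values are finite
  have e1 : K u1 = ((f u1 : ℝ) : EReal) := (EReal.coe_toReal (htop u1) hb1).symm
  have e2 : K u2 = ((f u2 : ℝ) : EReal) := (EReal.coe_toReal (htop u2) (hbot u2 h2)).symm
  have e3 : K u3 = ((f u3 : ℝ) : EReal) := (EReal.coe_toReal (htop u3) (hbot u3 h3)).symm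
  have e4 : K u4 = ((f u4 : ℝ) : EReal) := (EReal.coe_toReal (htop u4) hb4).symm
  rw [e1, e2, e3, e4, ← EReal.coe_mul, ← EReal.coe_mul, ← EReal.coe_mul, ← EReal.coe_mul,
    ← EReal.coe_add, ← EReal.coe_add, EReal.coe_le_coe_iff]
  -- real inequality via limits
  have hu1 : u1 ∈ Icc c d := ⟨h1, le_of_lt (lt_of_lt_of_le (h12.trans (h23.trans h34)) h4)⟩
  have hu4 : u4 ∈ Icc c d := ⟨le_of_lt (lt_of_le_of_lt h1 (h12.trans (h23.trans h34))), h4⟩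
  have T1 : Tendsto f (𝓝[Icc c d] u1) (𝓝 (f u1)) :=
    (EReal.tendsto_toReal (htop u1) hb1).comp (hcont u1 hu1)
  have T4 : Tendsto f (𝓝[Icc c d] u4) (𝓝 (f u4)) :=
    (EReal.tendsto_toReal (htop u4) hb4).comp (hcont u4 hu4)
  -- the moving points
  have hA : Tendsto (fun ε : ℝ => u4 - ε) (𝓝[>] 0) (𝓝[Icc c d] u4) := by
    apply tendsto_nhdsWithin_of_tendsto_nhds_of_eventually_within
    · have : Tendsto (fun ε : ℝ => u4 - ε) (𝓝 0) (𝓝 (u4 - 0)) :=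
        tendsto_const_nhds.sub tendsto_id
      simpa using this.mono_left nhdsWithin_le_nhds
    · filter_upwards [Ioo_mem_nhdsGT_of_mem (Set.left_mem_Ico.mpr
        (show (0:ℝ) < u4 - c by linarith [h2.1]))] with ε hε
      exact ⟨by linarith [hε.2], by linarith [hε.1]⟩
  have hB : Tendsto (fun ε : ℝ => u1 + (p / q) * ε) (𝓝[>] 0) (𝓝[Icc c d] u1) := by
    apply tendsto_nhdsWithin_of_tendsto_nhds_of_eventually_within
    · have : Tendsto (fun ε : ℝ => u1 + (p / q) * ε) (𝓝 0) (𝓝 (u1 + (p / q) * 0)) :=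
        tendsto_const_nhds.add (tendsto_const_nhds.mul tendsto_id)
      simpa using this.mono_left nhdsWithin_le_nhds
    · have hdu : (0:ℝ) < d - u1 := by
        have := lt_of_lt_of_le (h12.trans (h23.trans h34)) h4
        linarith
      filter_upwards [Ioo_mem_nhdsGT_of_mem (Set.left_mem_Ico.mpr
        (show (0:ℝ) < (q / p) * (d - u1) by positivity))] with ε hε
      have hpe : 0 < (p / q) * ε := mul_pos hpq hε.1
      have h' : (p / q) * ε < d - u1 := by
        calc (p / q) * ε < (p / q) * ((q / p) * (d - u1)) :=
              mul_lt_mul_of_pos_left hε.2 hpq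
          _ = d - u1 := by field_simp
      exact ⟨by linarith, by linarith⟩
  have Tlhs : Tendsto (fun ε : ℝ => p * f (u4 - ε) + q * f (u1 + (p / q) * ε)) (𝓝[>] 0)
      (𝓝 (p * f u4 + q * f u1)) :=
    (tendsto_const_nhds.mul (T4.comp hA)).add (tendsto_const_nhds.mul (T1.comp hB))
  have Hev : ∀ᶠ ε in 𝓝[>] (0:ℝ),
      p * f (u4 - ε) + q * f (u1 + (p / q) * ε) ≤ p * f u3 + q * f u2 := by
    have hd1 : (0:ℝ) < u2 - u1 := by linarith
    have hd2 : (0:ℝ) < u4 - u3 := by linarith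
    filter_upwards [Ioo_mem_nhdsGT_of_mem (Set.left_mem_Ico.mpr
      (show (0:ℝ) < min (u4 - u3) ((q / p) * (u2 - u1)) from
        lt_min hd2 (by positivity)))] with ε hε
    have hε1 : 0 < ε := hε.1
    have hε2 : ε < u4 - u3 := lt_of_lt_of_le hε.2 (min_le_left _ _)
    have hε3 : ε < (q / p) * (u2 - u1) := lt_of_lt_of_le hε.2 (min_le_right _ _)
    have hpe : 0 < (p / q) * ε := mul_pos hpq hε1
    have h' : (p / q) * ε < u2 - u1 := by
      calc (p / q) * ε < (p / q) * ((q / p) * (u2 - u1)) := mul_lt_mul_of_pos_left hε3 hpq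
        _ = u2 - u1 := by field_simp
    have hqp : q * (p / q) = p := by field_simp
    apply lemA f c d hconc (u1 + (p / q) * ε) u2 u3 (u4 - ε) p q
    · exact ⟨lt_of_le_of_lt h1 (by linarith), by linarith [h2.2]⟩
    · linarith
    · exact h23
    · linarith
    · exact ⟨by linarith [h3.1], by linarith [h4]⟩
    · exact hp
    · exact hq
    · linear_combination heq + ε * hqp
  exact le_of_tendsto Tlhs Hev

/-- Lemma (widening, part (c)): any kernel, `p(a-α) = q(β-b)`, inequality on `[0,α] ∪ [β,1]`;
no monotonicity is assumed. -/
theorem widening_both (K : ℝ → EReal) (hK : KernelFun K)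
    (α a b β p q : ℝ) (h0 : 0 ≤ α) (h1 : α < a) (h2 : a < b) (h3 : b < β) (h4 : β ≤ 1)
    (hp : 0 < p) (hq : 0 < q) (hκ : p * (a - α) = q * (β - b)) :
    ∀ t ∈ Icc (0:ℝ) α ∪ Icc β 1,
      (p : EReal) * K (t - α) + (q : EReal) * K (t - β) ≤
        (p : EReal) * K (t - a) + (q : EReal) * K (t - b) := by
  obtain ⟨htop, hbot, hc1, hc2, hco1, hco2⟩ := hK
  rintro t (ht | ht)
  · exact lemB K (-1) 0 htop (fun s hs => hbot s (Or.inl hs)) hc1 hco1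
      (t - β) (t - b) (t - a) (t - α) p q (by linarith [ht.1]) (by linarith) (by linarith)
      (by linarith) (by linarith [ht.2]) hp hq (by linear_combination hκ)
  · exact lemB K 0 1 htop (fun s hs => hbot s (Or.inr hs)) hc2 hco2
      (t - β) (t - b) (t - a) (t - α) p q (by linarith [ht.1]) (by linarith) (by linarith)
      (by linarith) (by linarith [ht.2]) hp hq (by linear_combination hκ)
end
end

section
/- Let n ∈ ℕ, ν₁,…,νₙ > 0, let K be a strictly concave monotone kernel function, and let J be an upper semicontinuous n-field function. Let x, y be regular node systems (all interval maxima mⱼ finite) with xᵢ ≤ yᵢ for all i = 1,…,n and x ≠ y. Then m₀(x) < m₀(y) and mₙ(x) > mₙ(y); in particular intertwining of maxima holds for x and y. -/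
open Set

noncomputable section

/-!
Strict concavity upgrades the monotonicity of `K` to strict monotonicity on `[-1, 0]` and on
`[0, 1]`. On `[0, x₁]` every difference `t - xⱼ` lies in `[-1, 0]` and `t - yⱼ ≤ t - xⱼ`, so each
translate of `K` is at least as large for `y` as for `x`, strictly so at an index where
`xᵢ < yᵢ`. Hence `F(x, ·) < F(y, ·)` on `[0, x₁] ⊆ [0, y₁]` wherever `F(x, ·)` is finite; as
`F(x, ·)` is upper semicontinuous it attains `m₀(x)` at some point, which gives
`m₀(x) < m₀(y)`. The last interval `[yₙ, 1] ⊆ [xₙ, 1]` is treated in the same way, now with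
`K` increasing on `[0, 1]`.
-/

section Monotonicity

lemma strictMonoOn_Icc_of_strictMonoOn_Ioo {α β : Type*} [LinearOrder α] [TopologicalSpace α]
    [OrderTopology α] [DenselyOrdered α] [LinearOrder β] [TopologicalSpace β]
    [OrderClosedTopology β] {f : α → β} {a b : α} (hf : StrictMonoOn f (Ioo a b))
    (hcont : ContinuousOn f (Icc a b)) : StrictMonoOn f (Icc a b) := by
  intro u hu v hv huv
  obtain ⟨c, huc, hcv⟩ := exists_between huv
  obtain ⟨d, hcd, hdv⟩ := exists_between hcv
  have hc : c ∈ Ioo a b := ⟨hu.1.trans_lt huc, hcv.trans_le hv.2⟩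
  have hd : d ∈ Ioo a b := ⟨hu.1.trans_lt (huc.trans hcd), hdv.trans_le hv.2⟩
  have hIoo_uc : Ioo u c ⊆ Icc a b := fun z hz => ⟨hu.1.trans hz.1.le, hz.2.le.trans hc.2.le⟩
  have hIoo_dv : Ioo d v ⊆ Icc a b := fun z hz => ⟨hd.1.le.trans hz.1.le, hz.2.le.trans hv.2⟩
  have hfu : f u ≤ f c :=
    ContinuousWithinAt.closure_le (by rw [closure_Ioo huc.ne]; exact left_mem_Icc.2 huc.le)
      ((hcont u hu).mono hIoo_uc) continuousWithinAt_const
      fun z hz => (hf ⟨hu.1.trans_lt hz.1, hz.2.trans hc.2⟩ hc hz.2).le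
  have hfv : f d ≤ f v :=
    ContinuousWithinAt.closure_le (by rw [closure_Ioo hdv.ne]; exact right_mem_Icc.2 hdv.le)
      continuousWithinAt_const ((hcont v hv).mono hIoo_dv)
      fun z hz => (hf hd ⟨hd.1.trans hz.1, hz.2.trans_le hv.2⟩ hz.1).le
  exact hfu.trans_lt ((hf hc hd hcd).trans_le hfv)

lemma strictAntiOn_Icc_of_strictAntiOn_Ioo {α β : Type*} [LinearOrder α] [TopologicalSpace α]
    [OrderTopology α] [DenselyOrdered α] [LinearOrder β] [TopologicalSpace β]
    [OrderClosedTopology β] {f : α → β} {a b : α} (hf : StrictAntiOn f (Ioo a b))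
    (hcont : ContinuousOn f (Icc a b)) : StrictAntiOn f (Icc a b) :=
  strictMonoOn_Icc_of_strictMonoOn_Ioo (β := βᵒᵈ) hf hcont

lemma StrictConcaveOn.exists_lt_of_eq {s : Set ℝ} {g : ℝ → ℝ} (hg : StrictConcaveOn ℝ s g)
    {u v : ℝ} (hu : u ∈ s) (hv : v ∈ s) (huv : u < v) (heq : g u = g v) :
    ∃ m ∈ s, u < m ∧ m < v ∧ g u < g m := by
  obtain ⟨m, hum, hmv⟩ := exists_between huv
  have hm : m ∈ openSegment ℝ u v := by rw [openSegment_eq_Ioo huv]; exact ⟨hum, hmv⟩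
  have hlt := hg.lt_on_openSegment hu hv huv.ne hm
  rw [← heq, min_self] at hlt
  exact ⟨m, hg.1.openSegment_subset hu hv hm, hum, hmv, hlt⟩

variable {s : Set ℝ} {f : ℝ → EReal}

lemma strictMonoOn_of_monotoneOn_of_strictConcaveOn_toReal (hbot : ∀ t ∈ s, f t ≠ ⊥)
    (htop : ∀ t, f t ≠ ⊤) (hmono : MonotoneOn f s)
    (hconc : StrictConcaveOn ℝ s fun t => (f t).toReal) : StrictMonoOn f s := by
  intro u hu v hv huv
  refine (hmono hu hv huv.le).lt_of_ne fun heq => ?_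
  obtain ⟨m, hm, -, hmv, hlt⟩ :=
    hconc.exists_lt_of_eq hu hv huv (congrArg EReal.toReal heq)
  rw [heq] at hlt
  exact (EReal.toReal_le_toReal (hmono hm hv hmv.le) (hbot m hm) (htop v)).not_gt hlt

lemma strictAntiOn_of_antitoneOn_of_strictConcaveOn_toReal (hbot : ∀ t ∈ s, f t ≠ ⊥)
    (htop : ∀ t, f t ≠ ⊤) (hanti : AntitoneOn f s)
    (hconc : StrictConcaveOn ℝ s fun t => (f t).toReal) : StrictAntiOn f s := by
  intro u hu v hv huv
  refine (hanti hu hv huv.le).lt_of_ne' fun heq => ?_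
  obtain ⟨m, hm, hum, -, hlt⟩ :=
    hconc.exists_lt_of_eq hu hv huv (congrArg EReal.toReal heq)
  exact (EReal.toReal_le_toReal (hanti hu hm hum.le) (hbot m hm) (htop u)).not_gt hlt

end Monotonicity

section Kernel

variable {K : ℝ → EReal}

lemma KernelFun.strictAntiOn_Icc (hK : KernelFun K) (hSC : KStrictConcave K)
    (hM : KMonotone K) : StrictAntiOn K (Icc (-1) 0) :=
  strictAntiOn_Icc_of_strictAntiOn_Ioo
    (strictAntiOn_of_antitoneOn_of_strictConcaveOn_toReal (fun t ht => hK.2.1 t (Or.inl ht))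
      hK.1 hM.1 hSC.1) hK.2.2.2.2.1

lemma KernelFun.strictMonoOn_Icc (hK : KernelFun K) (hSC : KStrictConcave K)
    (hM : KMonotone K) : StrictMonoOn K (Icc 0 1) :=
  strictMonoOn_Icc_of_strictMonoOn_Ioo
    (strictMonoOn_of_monotoneOn_of_strictConcaveOn_toReal (fun t ht => hK.2.1 t (Or.inr ht))
      hK.1 hM.2 hSC.2) hK.2.2.2.2.2

end Kernel

section EReal

lemma EReal.coe_mul_lt_coe_mul {c : ℝ} (hc : 0 < c) {u v : EReal} (h : u < v) :
    (c : EReal) * u < c * v := by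
  have := EReal.strictMono_div_right_of_pos (b := ((c⁻¹ : ℝ) : EReal))
    (by exact_mod_cast inv_pos.2 hc) (EReal.coe_ne_top _) h
  simpa [div_eq_mul_inv, mul_comm, ← EReal.coe_inv, inv_inv] using this

lemma EReal.coe_mul_ne_top {c : ℝ} (hc : 0 ≤ c) {u : EReal} (hu : u ≠ ⊤) :
    (c : EReal) * u ≠ ⊤ :=
  (EReal.mul_ne_top _ _).2
    ⟨Or.inl (EReal.coe_ne_bot c), Or.inl (EReal.coe_nonneg.2 hc), Or.inl (EReal.coe_ne_top c),
      Or.inr hu⟩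

lemma EReal.continuous_coe_mul {c : ℝ} (hc : c ≠ 0) :
    Continuous fun z : EReal => (c : EReal) * z :=
  continuous_iff_continuousAt.2 fun z =>
    (EReal.continuousAt_mul (p := ((c : EReal), z)) (Or.inl (by simpa using hc))
      (Or.inl (by simpa using hc)) (Or.inl (EReal.coe_ne_bot c))
      (Or.inl (EReal.coe_ne_top c))).comp (continuous_const.prodMk continuous_id).continuousAt

variable {ι : Type*} {s : Finset ι}

lemma EReal.sum_ne_top {f : ι → EReal} (h : ∀ i ∈ s, f i ≠ ⊤) : ∑ i ∈ s, f i ≠ ⊤ :=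
  Finset.sum_induction f (· ≠ ⊤) (fun _ _ ha hb => (EReal.add_lt_top ha hb).ne)
    EReal.zero_ne_top h

lemma EReal.sum_lt_sum {f g : ι → EReal} (hf : ∑ j ∈ s, f j ≠ ⊥) (hg : ∀ j ∈ s, g j ≠ ⊤)
    (hle : ∀ j ∈ s, f j ≤ g j) {i : ι} (hi : i ∈ s) (hlt : f i < g i) :
    ∑ j ∈ s, f j < ∑ j ∈ s, g j := by
  classical
  rw [← Finset.add_sum_erase s f hi] at hf ⊢
  rw [← Finset.add_sum_erase s g hi]
  exact EReal.add_lt_add_of_lt_of_le hlt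
    (Finset.sum_le_sum fun j hj => hle j (Finset.mem_of_mem_erase hj))
    (EReal.add_eq_bot_iff.not.1 hf |> not_or.1 |>.2)
    (EReal.sum_ne_top fun j hj => hg j (Finset.mem_of_mem_erase hj))

variable {α : Type*} [TopologicalSpace α] {S : Set α}

lemma EReal.upperSemicontinuousOn_add {f g : α → EReal} (hf : UpperSemicontinuousOn f S)
    (hg : UpperSemicontinuousOn g S) (hftop : ∀ a ∈ S, f a ≠ ⊤) (hgtop : ∀ a ∈ S, g a ≠ ⊤) :
    UpperSemicontinuousOn (fun a => f a + g a) S :=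
  hf.add' hg fun a ha => EReal.continuousAt_add (Or.inl (hftop a ha)) (Or.inr (hgtop a ha))

lemma EReal.upperSemicontinuousOn_sum {f : ι → α → EReal}
    (hf : ∀ i ∈ s, UpperSemicontinuousOn (f i) S) (htop : ∀ i ∈ s, ∀ a ∈ S, f i a ≠ ⊤) :
    UpperSemicontinuousOn (fun a => ∑ i ∈ s, f i a) S := by
  have := Finset.sum_induction f (fun g => UpperSemicontinuousOn g S ∧ ∀ a ∈ S, g a ≠ ⊤)
    (fun g h hg hh => ⟨EReal.upperSemicontinuousOn_add hg.1 hh.1 hg.2 hh.2,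
      fun a ha => (EReal.add_lt_top (hg.2 a ha) (hh.2 a ha)).ne⟩)
    ⟨upperSemicontinuousOn_const, fun _ _ => EReal.zero_ne_top⟩ fun i hi => ⟨hf i hi, htop i hi⟩
  simpa only [Finset.sum_fn] using this.1

end EReal

lemma sSup_image_lt_sSup_image_of_upperSemicontinuousOn {α β : Type*} [TopologicalSpace α]
    [CompleteLinearOrder β] {f g : α → β} {s t : Set α} (hs : IsCompact s) (hne : s.Nonempty)
    (hst : s ⊆ t) (hf : UpperSemicontinuousOn f s) (hbot : sSup (f '' s) ≠ ⊥)
    (hlt : ∀ a ∈ s, f a ≠ ⊥ → f a < g a) : sSup (f '' s) < sSup (g '' t) := by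
  obtain ⟨a, ha, hmax⟩ := hf.exists_isMaxOn hne hs
  have hsup : sSup (f '' s) ≤ f a := sSup_le (forall_mem_image.2 hmax)
  calc sSup (f '' s) ≤ f a := hsup
    _ < g a := hlt a ha (ne_bot_of_le_ne_bot hbot hsup)
    _ ≤ sSup (g '' t) := le_sSup (mem_image_of_mem g (hst ha))

section SumTrans

variable {n : ℕ} {ν : Fin n → ℝ} {K J : ℝ → EReal}

lemma upperSemicontinuousOn_sumTrans (hν : ∀ i, 0 < ν i) (hKtop : ∀ t, K t ≠ ⊤)
    (hJtop : ∀ t, J t ≠ ⊤) {s I : Set ℝ} (hJ : UpperSemicontinuousOn J s)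
    (hK : ContinuousOn K I) {x : Fin n → ℝ} (hxI : ∀ j, ∀ t ∈ s, t - x j ∈ I) :
    UpperSemicontinuousOn (sumTrans n ν K J x) s :=
  EReal.upperSemicontinuousOn_add hJ
    (EReal.upperSemicontinuousOn_sum
      (fun j _ => ((EReal.continuous_coe_mul (hν j).ne').comp_continuousOn
        (hK.comp (continuous_sub_right _).continuousOn (hxI j))).upperSemicontinuousOn)
      fun j _ _ _ => EReal.coe_mul_ne_top (hν j).le (hKtop _))
    (fun t _ => hJtop t)
    fun _ _ => EReal.sum_ne_top fun j _ => EReal.coe_mul_ne_top (hν j).le (hKtop _)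

lemma sumTrans_lt_sumTrans (hν : ∀ i, 0 < ν i) (hKtop : ∀ t, K t ≠ ⊤) {x y : Fin n → ℝ} {t : ℝ}
    (hJtop : J t ≠ ⊤) (hcmp : ∀ j, K (t - x j) ≤ K (t - y j)) {i : Fin n}
    (hlt : K (t - x i) < K (t - y i)) (hbot : sumTrans n ν K J x t ≠ ⊥) :
    sumTrans n ν K J x t < sumTrans n ν K J y t := by
  obtain ⟨hJbot, hSbot⟩ := not_or.1 (EReal.add_eq_bot_iff.not.1 hbot)
  rw [sumTrans, sumTrans, ← EReal.coe_toReal hJtop hJbot]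
  exact EReal.add_lt_add_left_coe (EReal.sum_lt_sum hSbot
    (fun j _ => EReal.coe_mul_ne_top (hν j).le (hKtop _))
    (fun j _ => mul_le_mul_of_nonneg_left (hcmp j) (EReal.coe_nonneg.2 (hν j).le))
    (Finset.mem_univ i) (EReal.coe_mul_lt_coe_mul (hν i) hlt)) _

end SumTrans

section NodeSystem

variable {n : ℕ} {ν : Fin (n + 1) → ℝ} {K J : ℝ → EReal}

lemma intMax_zero (x : Fin (n + 1) → ℝ) :
    intMax (n + 1) ν K J x 0 = sSup (sumTrans (n + 1) ν K J x '' Icc 0 (x 0)) := by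
  simp [intMax, extNodes]

lemma intMax_last (x : Fin (n + 1) → ℝ) :
    intMax (n + 1) ν K J x (Fin.last (n + 1)) =
      sSup (sumTrans (n + 1) ν K J x '' Icc (x (Fin.last n)) 1) := by
  rw [intMax, extNodes, Fin.cons_succ, Fin.snoc_last, ← Fin.succ_last, ← Fin.succ_castSucc,
    Fin.cons_succ, Fin.snoc_castSucc]

lemma closedSimplex.sub_mem_Icc_neg_one_zero {x : Fin (n + 1) → ℝ}
    (hx : closedSimplex (n + 1) x) {t : ℝ} (ht : t ∈ Icc 0 (x 0)) (j : Fin (n + 1)) :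
    t - x j ∈ Icc (-1) 0 :=
  ⟨by linarith [ht.1, (hx.1 j).2], by linarith [ht.2, hx.2 (Fin.zero_le j)]⟩

lemma closedSimplex.sub_mem_Icc_zero_one {x : Fin (n + 1) → ℝ} (hx : closedSimplex (n + 1) x)
    {t : ℝ} (ht : t ∈ Icc (x (Fin.last n)) 1) (j : Fin (n + 1)) : t - x j ∈ Icc 0 1 :=
  ⟨by linarith [ht.1, hx.2 (Fin.le_last j)], by linarith [ht.2, (hx.1 j).1]⟩

variable {x y : Fin (n + 1) → ℝ} {i : Fin (n + 1)}

lemma intMax_zero_lt_intMax_zero (hν : ∀ i, 0 < ν i) (hKtop : ∀ t, K t ≠ ⊤)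
    (hKcont : ContinuousOn K (Icc (-1) 0)) (hKanti : StrictAntiOn K (Icc (-1) 0))
    (hJtop : ∀ t, J t ≠ ⊤) (hJ : UpperSemicontinuousOn J (Icc 0 1))
    (hx : closedSimplex (n + 1) x) (hy : closedSimplex (n + 1) y)
    (hxr : intMax (n + 1) ν K J x 0 ≠ ⊥) (hle : ∀ j, x j ≤ y j) (hlt : x i < y i) :
    intMax (n + 1) ν K J x 0 < intMax (n + 1) ν K J y 0 := by
  rw [intMax_zero] at hxr ⊢
  rw [intMax_zero]
  have hsub : Icc 0 (x 0) ⊆ Icc 0 (y 0) := Icc_subset_Icc_right (hle 0)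
  refine sSup_image_lt_sSup_image_of_upperSemicontinuousOn isCompact_Icc
    (nonempty_Icc.2 (hx.1 0).1) hsub ?_ hxr fun t ht hbot => ?_
  · exact upperSemicontinuousOn_sumTrans hν hKtop hJtop
      (hJ.mono (Icc_subset_Icc_right (hx.1 0).2)) hKcont
      fun j t ht => hx.sub_mem_Icc_neg_one_zero ht j
  · have hty := hy.sub_mem_Icc_neg_one_zero (hsub ht)
    exact sumTrans_lt_sumTrans hν hKtop (hJtop t)
      (fun j => hKanti.antitoneOn (hty j) (hx.sub_mem_Icc_neg_one_zero ht j)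
        (by linarith [hle j]))
      (hKanti (hty i) (hx.sub_mem_Icc_neg_one_zero ht i) (by linarith)) hbot

lemma intMax_last_lt_intMax_last (hν : ∀ i, 0 < ν i) (hKtop : ∀ t, K t ≠ ⊤)
    (hKcont : ContinuousOn K (Icc 0 1)) (hKmono : StrictMonoOn K (Icc 0 1))
    (hJtop : ∀ t, J t ≠ ⊤) (hJ : UpperSemicontinuousOn J (Icc 0 1))
    (hx : closedSimplex (n + 1) x) (hy : closedSimplex (n + 1) y)
    (hyr : intMax (n + 1) ν K J y (Fin.last (n + 1)) ≠ ⊥) (hle : ∀ j, x j ≤ y j)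
    (hlt : x i < y i) :
    intMax (n + 1) ν K J y (Fin.last (n + 1)) < intMax (n + 1) ν K J x (Fin.last (n + 1)) := by
  rw [intMax_last] at hyr ⊢
  rw [intMax_last]
  have hsub : Icc (y (Fin.last n)) 1 ⊆ Icc (x (Fin.last n)) 1 :=
    Icc_subset_Icc_left (hle (Fin.last n))
  refine sSup_image_lt_sSup_image_of_upperSemicontinuousOn isCompact_Icc
    (nonempty_Icc.2 (hy.1 _).2) hsub ?_ hyr fun t ht hbot => ?_
  · exact upperSemicontinuousOn_sumTrans hν hKtop hJtop
      (hJ.mono (Icc_subset_Icc_left (hy.1 _).1)) hKcont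
      fun j t ht => hy.sub_mem_Icc_zero_one ht j
  · have htx := hx.sub_mem_Icc_zero_one (hsub ht)
    exact sumTrans_lt_sumTrans hν hKtop (hJtop t)
      (fun j => hKmono.monotoneOn (hy.sub_mem_Icc_zero_one ht j) (htx j) (by linarith [hle j]))
      (hKmono (hy.sub_mem_Icc_zero_one ht i) (htx i) (by linarith)) hbot

end NodeSystem

/-- Lemma (comparable node systems): if `x ≤ y` coordinatewise and `x ≠ y`, then
`m₀(x) < m₀(y)` and `mₙ(x) > mₙ(y)`; in particular intertwining of maxima holds. -/
theorem comparable_intertwining (n : ℕ) (ν : Fin n → ℝ) (hν : ∀ i, 0 < ν i)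
    (K J : ℝ → EReal) (hK : KernelFun K) (hSC : KStrictConcave K) (hM : KMonotone K)
    (hJ : NFieldFun n J) (hJusc : UpperSemicontinuousOn J (Icc (0:ℝ) 1))
    (x y : Fin n → ℝ) (hx : closedSimplex n x) (hy : closedSimplex n y)
    (hxr : regularNodes n ν K J x) (hyr : regularNodes n ν K J y)
    (hle : ∀ i, x i ≤ y i) (hne : x ≠ y) :
    intMax n ν K J x 0 < intMax n ν K J y 0 ∧
      intMax n ν K J y (Fin.last n) < intMax n ν K J x (Fin.last n) := by
  obtain ⟨i, hi⟩ := Function.ne_iff.1 hne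
  cases n with
  | zero => exact i.elim0
  | succ n =>
    have hlt : x i < y i := (hle i).lt_of_ne hi
    exact ⟨intMax_zero_lt_intMax_zero hν hK.1 hK.2.2.2.2.1 (hK.strictAntiOn_Icc hSC hM) hJ.1
        hJusc hx hy (hxr 0) hle hlt,
      intMax_last_lt_intMax_last hν hK.1 hK.2.2.2.2.2 (hK.strictMonoOn_Icc hSC hM) hJ.1
        hJusc hx hy (hyr _) hle hlt⟩
end
end

section
/- Let n ∈ {1,2,3}, ν₁,…,νₙ > 0, K a strictly concave strictly monotone kernel function, J an upper semicontinuous n-field function. Then there is at most one equioscillation point, i.e., at most one node system w with m₀(w) = m₁(w) = ⋯ = mₙ(w) (all finite). -/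
open Set

noncomputable section

/-!
Let `x ≠ y` be equioscillation points with values `c` and `c'`, and put
`Dᵢ(t) = K (t - xᵢ) - K (t - yᵢ)`. At a maximum point of `F(x, ·)` we have `∑ νᵢ Dᵢ ≥ c - c'`,
at a maximum point of `F(y, ·)` the reverse inequality. If `xᵢ < yᵢ`, strict monotonicity of `K`
makes `Dᵢ < 0` left of `xᵢ` and `Dᵢ > 0` right of `yᵢ`, and concavity makes `Dᵢ` nonincreasing
on each of these half-lines, since increments of a concave function decrease; symmetrically
if `yᵢ < xᵢ`.

If all nodes of `x` lie farther than those of `y` from some interval of `y` (a split), evaluating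
at the maximum of `F(y, ·)` on that interval gives `c' < c`. If test points `a ≤ s ≤ b`, maxima
of `F(x, ·)` at `a, b` and of `F(y, ·)` at `s`, can be placed so that `Dᵢ(a) + Dᵢ(b) < Dᵢ(s)`
whenever `xᵢ ≠ yᵢ`, then `2 (c - c') < c - c'`, that is `c < c'`. A split with nodes moving in
both directions admits such test points, and one with nodes moving in one direction only is also
a split of `(y, x)`. If neither `(x, y)` nor `(y, x)` has a split, the signs of `xᵢ - yᵢ`
alternate along three nodes; for `n ≤ 3` this is the pattern `(-, +, -)` or `(+, -, +)`, where
test points exist for both `(x, y)` and `(y, x)`.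
-/

open Filter Topology

theorem ConcaveOn.add_le_add_shift {s : Set ℝ} {f : ℝ → ℝ} (hf : ConcaveOn ℝ s f)
    {p q Δ : ℝ} (hp : p ∈ s) (hqΔ : q + Δ ∈ s) (hpq : p ≤ q) (hΔ : 0 ≤ Δ) :
    f p + f (q + Δ) ≤ f q + f (p + Δ) := by
  rcases (add_le_add hpq hΔ : p + 0 ≤ q + Δ).eq_or_lt with h | h
  · obtain rfl : q = p := by linarith
    obtain rfl : Δ = 0 := by linarith
    rfl
  have hT : 0 < q + Δ - p := by linarith
  obtain ⟨a, b, ha, hb, hab, hq, hpΔ⟩ : ∃ a b : ℝ, 0 ≤ a ∧ 0 ≤ b ∧ a + b = 1 ∧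
      a • p + b • (q + Δ) = q ∧ b • p + a • (q + Δ) = p + Δ :=
    ⟨Δ / (q + Δ - p), (q - p) / (q + Δ - p), div_nonneg hΔ hT.le,
      div_nonneg (by linarith) hT.le, by field_simp; ring,
      by simp only [smul_eq_mul]; field_simp; ring, by simp only [smul_eq_mul]; field_simp; ring⟩
  have h₁ := hq ▸ hf.2 hp hqΔ ha hb hab
  have h₂ := hpΔ ▸ hf.2 hp hqΔ hb ha (by rw [add_comm, hab])
  simp only [smul_eq_mul] at h₁ h₂
  linear_combination h₁ + h₂ - (f p + f (q + Δ)) * hab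

theorem ContinuousOn.add_le_add_shift_of_concaveOn_Ioo {f : ℝ → EReal} {l r : ℝ}
    (hf : ContinuousOn f (Icc l r)) (hlr : l < r) (htop : ∀ t, f t ≠ ⊤)
    (hbot : ∀ t ∈ Ioo l r, f t ≠ ⊥) (hconc : ConcaveOn ℝ (Ioo l r) fun t => (f t).toReal)
    {p q Δ : ℝ} (hp : l ≤ p) (hpq : p ≤ q) (hΔ : 0 ≤ Δ) (hqΔ : q + Δ ≤ r) :
    f p + f (q + Δ) ≤ f q + f (p + Δ) := by
  have hpI : p ∈ Icc l r := ⟨hp, by linarith⟩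
  have hqI : q ∈ Icc l r := ⟨by linarith, by linarith⟩
  have hpΔI : p + Δ ∈ Icc l r := ⟨by linarith, by linarith⟩
  have hqΔI : q + Δ ∈ Icc l r := ⟨by linarith, hqΔ⟩
  -- Contract `[l, r]` towards its midpoint into `(l, r)`, where `f` is concave, and pass to the
  -- limit.
  set g : ℝ → ℝ → ℝ := fun θ t => (l + r) / 2 + (1 - θ) * (t - (l + r) / 2)
  have hg_mem : ∀ θ ∈ Ioo (0 : ℝ) 1, ∀ t ∈ Icc l r, g θ t ∈ Ioo l r := by
    rintro θ ⟨hθ₀, hθ₁⟩ t ⟨htl, htr⟩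
    simp only [g]
    constructor <;> nlinarith [mul_nonneg (sub_nonneg.2 hθ₁.le) (sub_nonneg.2 htl),
      mul_nonneg (sub_nonneg.2 hθ₁.le) (sub_nonneg.2 htr), mul_pos hθ₀ (sub_pos.2 hlr)]
  have hlim : ∀ t ∈ Icc l r, Tendsto (fun θ => f (g θ t)) (𝓝[>] 0) (𝓝 (f t)) := by
    intro t ht
    have hcont : Continuous fun θ => g θ t := by fun_prop
    refine (hf t ht).tendsto.comp (tendsto_nhdsWithin_of_tendsto_nhds_of_eventually_within _
      ((hcont.tendsto' 0 t (by simp [g])).mono_left nhdsWithin_le_nhds) ?_)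
    filter_upwards [Ioo_mem_nhdsGT (zero_lt_one' ℝ)] with θ hθ
    exact Ioo_subset_Icc_self (hg_mem θ hθ t ht)
  have hlim₂ : ∀ u ∈ Icc l r, ∀ v ∈ Icc l r,
      Tendsto (fun θ => f (g θ u) + f (g θ v)) (𝓝[>] 0) (𝓝 (f u + f v)) := fun u hu v hv =>
    (EReal.continuousAt_add (.inl (htop u)) (.inr (htop v))).tendsto.comp
      ((hlim u hu).prodMk_nhds (hlim v hv))
  refine le_of_tendsto_of_tendsto (hlim₂ p hpI _ hqΔI) (hlim₂ q hqI _ hpΔI) ?_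
  filter_upwards [Ioo_mem_nhdsGT (zero_lt_one' ℝ)] with θ hθ
  have hcoe : ∀ t ∈ Icc l r, f (g θ t) = ((f (g θ t)).toReal : EReal) := fun t ht =>
    (EReal.coe_toReal (htop _) (hbot _ (hg_mem θ hθ t ht))).symm
  have hshift : ∀ t, g θ (t + Δ) = g θ t + (1 - θ) * Δ := fun t => by simp only [g]; ring
  rw [hcoe p hpI, hcoe _ hqΔI, hcoe q hqI, hcoe _ hpΔI, ← EReal.coe_add, ← EReal.coe_add,
    EReal.coe_le_coe_iff, hshift, hshift]
  exact hconc.add_le_add_shift (hg_mem θ hθ p hpI) (hshift q ▸ hg_mem θ hθ _ hqΔI)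
    (by simp only [g]; nlinarith [hθ.2]) (by nlinarith [hθ.2])

namespace EReal

theorem coe_mul_lt_coe_mul_s13 {r : ℝ} (hr : 0 < r) {a b : EReal} (h : a < b) :
    (r : EReal) * a < r * b := by
  refine (mul_le_mul_of_nonneg_left h.le (by exact_mod_cast hr.le)).lt_of_ne fun heq => h.ne ?_
  have := congrArg (((r⁻¹ : ℝ) : EReal) * ·) heq
  simpa only [← mul_assoc, ← coe_mul, inv_mul_cancel₀ hr.ne', coe_one, one_mul] using this

theorem coe_mul_ne_top_s13 {r : ℝ} (hr : 0 ≤ r) {a : EReal} (ha : a ≠ ⊤) : (r : EReal) * a ≠ ⊤ :=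
  (mul_ne_top _ _).2 ⟨.inl (coe_ne_bot _), .inl (mod_cast hr), .inl (coe_ne_top _), .inr ha⟩

theorem coe_mul_ne_bot {r : ℝ} (hr : 0 ≤ r) {a : EReal} (ha : a ≠ ⊥) : (r : EReal) * a ≠ ⊥ :=
  (mul_ne_bot _ _).2 ⟨.inl (coe_ne_bot _), .inr ha, .inl (coe_ne_top _), .inl (mod_cast hr)⟩

theorem sum_ne_top_s13 {ι : Type*} {s : Finset ι} {f : ι → EReal} (h : ∀ i ∈ s, f i ≠ ⊤) :
    ∑ i ∈ s, f i ≠ ⊤ :=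
  Finset.sum_induction f (· ≠ ⊤) (fun _ _ => add_ne_top) (by simp) h

theorem sum_ne_bot {ι : Type*} {s : Finset ι} {f : ι → EReal} (h : ∀ i ∈ s, f i ≠ ⊥) :
    ∑ i ∈ s, f i ≠ ⊥ :=
  Finset.sum_induction f (· ≠ ⊥) (fun _ _ ha hb => add_ne_bot_iff.2 ⟨ha, hb⟩) (by simp) h

theorem sum_coe_mul_lt_sum_coe_mul {ι : Type*} [Fintype ι] {ν : ι → ℝ} (hν : ∀ i, 0 < ν i)
    {f g : ι → EReal} (hle : ∀ i, f i ≤ g i) {i₀ : ι} (hlt : f i₀ < g i₀)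
    (hf : ∀ i, f i ≠ ⊥) (hg : ∀ i, g i ≠ ⊤) :
    ∑ i, (ν i : EReal) * f i < ∑ i, (ν i : EReal) * g i := by
  classical
  rw [← Finset.add_sum_erase _ _ (Finset.mem_univ i₀),
    ← Finset.add_sum_erase _ _ (Finset.mem_univ i₀)]
  exact add_lt_add_of_lt_of_le (coe_mul_lt_coe_mul_s13 (hν i₀) hlt)
    (Finset.sum_le_sum fun i _ => mul_le_mul_of_nonneg_left (hle i) (mod_cast (hν i).le))
    (sum_ne_bot fun i _ => coe_mul_ne_bot (hν i).le (hf i))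
    (sum_ne_top_s13 fun i _ => coe_mul_ne_top_s13 (hν i).le (hg i))

theorem upperSemicontinuousOn_sum_s13 {α ι : Type*} [TopologicalSpace α] {s : Finset ι}
    {f : ι → α → EReal} {S : Set α} (hf : ∀ i ∈ s, UpperSemicontinuousOn (f i) S)
    (htop : ∀ i ∈ s, ∀ t ∈ S, f i t ≠ ⊤) :
    UpperSemicontinuousOn (fun t => ∑ i ∈ s, f i t) S := by
  have := Finset.sum_induction f (fun g => UpperSemicontinuousOn g S ∧ ∀ t ∈ S, g t ≠ ⊤)
    (fun g h hg hh => ⟨hg.1.add' hh.1 fun t ht =>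
        continuousAt_add (.inl (hg.2 t ht)) (.inr (hh.2 t ht)),
      fun t ht => add_ne_top (hg.2 t ht) (hh.2 t ht)⟩)
    ⟨upperSemicontinuousOn_const, by simp⟩ fun i hi => ⟨hf i hi, htop i hi⟩
  simpa only [Finset.sum_fn] using this.1

end EReal

namespace Fin

theorem monotone_cons {α : Type*} [Preorder α] {n : ℕ} {a : α} {f : Fin n → α}
    (hf : Monotone f) (ha : ∀ i, a ≤ f i) : Monotone (cons a f : Fin (n + 1) → α) :=
  monotone_iff_forall_lt.2 fun _ _ hij =>
    (liftFun_cons (· ≤ ·)).2 ⟨ha, fun _ _ h => hf h.le⟩ hij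

theorem monotone_snoc {α : Type*} [Preorder α] {n : ℕ} {b : α} {f : Fin n → α}
    (hf : Monotone f) (hb : ∀ i, f i ≤ b) : Monotone (snoc f b : Fin (n + 1) → α) := by
  rw [monotone_iff_le_succ]
  intro i
  rw [snoc_castSucc]
  obtain ⟨j, hj⟩ | hj := i.succ.eq_castSucc_or_eq_last
  · rw [hj, snoc_castSucc]
    exact hf (le_def.2 (by have := congrArg val hj; simp at this; omega))
  · rw [hj, snoc_last]
    exact hb i

theorem exists_mem_Icc_castSucc_succ {α : Type*} [LinearOrder α] :
    ∀ {m : ℕ} (f : Fin (m + 2) → α) {t : α}, t ∈ Icc (f 0) (f (last _)) →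
      ∃ k : Fin (m + 1), t ∈ Icc (f k.castSucc) (f k.succ)
  | 0, _, _, ht => ⟨0, ht⟩
  | m + 1, f, t, ⟨h₀, h₁⟩ => by
    rcases le_or_gt t (f (last (m + 1)).castSucc) with h | h
    · obtain ⟨k, hk⟩ := exists_mem_Icc_castSucc_succ (f ∘ castSucc) ⟨h₀, h⟩
      exact ⟨k.castSucc, by rw [succ_castSucc]; exact hk⟩
    · exact ⟨last _, h.le, h₁⟩

end Fin

namespace KernelFun

variable {K : ℝ → EReal}

theorem add_le_add_shift (hK : KernelFun K) {p q Δ : ℝ} (hpq : p ≤ q) (hΔ : 0 ≤ Δ)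
    (h : (-1 ≤ p ∧ q + Δ ≤ 0) ∨ (0 ≤ p ∧ q + Δ ≤ 1)) :
    K p + K (q + Δ) ≤ K q + K (p + Δ) := by
  obtain ⟨htop, hbot, hconc₁, hconc₂, hcont₁, hcont₂⟩ := hK
  rcases h with ⟨hp, hqΔ⟩ | ⟨hp, hqΔ⟩
  · exact hcont₁.add_le_add_shift_of_concaveOn_Ioo (by norm_num) htop
      (fun t ht => hbot t (.inl ht)) hconc₁ hp hpq hΔ hqΔ
  · exact hcont₂.add_le_add_shift_of_concaveOn_Ioo (by norm_num) htop
      (fun t ht => hbot t (.inr ht)) hconc₂ hp hpq hΔ hqΔ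

theorem strictAntiOn_Icc_s13 (hK : KernelFun K) (hSM : KStrictMonotone K) :
    StrictAntiOn K (Icc (-1) 0) := by
  rintro a ⟨ha, -⟩ b ⟨-, hb⟩ hab
  rcases hb.lt_or_eq with hb | rfl
  · exact hSM.1 ⟨ha, hab.trans hb⟩ ⟨by linarith, hb⟩ hab
  obtain ⟨-, -, -, -, hcont, -⟩ := hK
  have hlim : Tendsto K (𝓝[<] 0) (𝓝 (K 0)) :=
    (hcont 0 ⟨by norm_num, le_rfl⟩).tendsto.mono_left
      (nhdsWithin_le_of_mem (Icc_mem_nhdsLT (by norm_num)))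
  have hmid : K 0 ≤ K (a / 2) := by
    refine le_of_tendsto hlim ?_
    filter_upwards [Ioo_mem_nhdsLT (by linarith : a / 2 < 0)] with t ht
    exact (hSM.1 ⟨by linarith, by linarith⟩ ⟨by linarith [ht.1], ht.2⟩ ht.1).le
  exact hmid.trans_lt (hSM.1 ⟨ha, hab⟩ ⟨by linarith, by linarith⟩ (by linarith))

theorem strictMonoOn_Icc_s13 (hK : KernelFun K) (hSM : KStrictMonotone K) :
    StrictMonoOn K (Icc 0 1) := by
  rintro a ⟨ha, -⟩ b ⟨-, hb⟩ hab
  rcases ha.lt_or_eq with ha | rfl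
  · exact hSM.2 ⟨ha, by linarith⟩ ⟨ha.trans hab, hb⟩ hab
  obtain ⟨-, -, -, -, -, hcont⟩ := hK
  have hlim : Tendsto K (𝓝[>] 0) (𝓝 (K 0)) :=
    (hcont 0 ⟨le_rfl, by norm_num⟩).tendsto.mono_left
      (nhdsWithin_le_of_mem (Icc_mem_nhdsGT (by norm_num)))
  have hmid : K 0 ≤ K (b / 2) := by
    refine le_of_tendsto hlim ?_
    filter_upwards [Ioo_mem_nhdsGT (by linarith : 0 < b / 2)] with t ht
    exact (hSM.2 ⟨ht.1, by linarith [ht.2]⟩ ⟨by linarith, by linarith⟩ ht.2).le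
  exact hmid.trans_lt (hSM.2 ⟨by linarith, by linarith⟩ ⟨hab, hb⟩ (by linarith))

theorem lt_of_farther (hK : KernelFun K) (hSM : KStrictMonotone K) {u v s : ℝ}
    (hu : u ∈ Icc (0 : ℝ) 1) (hv : v ∈ Icc (0 : ℝ) 1) (hs : s ∈ Icc (0 : ℝ) 1)
    (h : (u < v ∧ v ≤ s) ∨ (s ≤ v ∧ v < u)) : K (s - v) < K (s - u) := by
  obtain ⟨hu₀, hu₁⟩ := hu
  obtain ⟨hv₀, hv₁⟩ := hv
  obtain ⟨hs₀, hs₁⟩ := hs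
  rcases h with ⟨huv, hvs⟩ | ⟨hsv, hvu⟩
  · exact hK.strictMonoOn_Icc_s13 hSM ⟨by linarith, by linarith⟩ ⟨by linarith, by linarith⟩
      (by linarith)
  · exact hK.strictAntiOn_Icc_s13 hSM ⟨by linarith, by linarith⟩ ⟨by linarith, by linarith⟩
      (by linarith)

theorem add_add_lt_of_lt (hK : KernelFun K) (hSM : KStrictMonotone K) {u v a s b : ℝ}
    (hu : u ∈ Icc (0 : ℝ) 1) (hv : v ∈ Icc (0 : ℝ) 1) (ha : a ∈ Icc (0 : ℝ) 1)
    (hb : b ∈ Icc (0 : ℝ) 1) (has : a ≤ s) (hsb : s ≤ b) (huv : u < v) (hau : a ≤ u)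
    (hpos : b ≤ u ∨ v ≤ s) (hfin : K (a - u) + K (b - u) + K (s - v) ≠ ⊥) :
    K (a - u) + K (b - u) + K (s - v) < K (a - v) + K (b - v) + K (s - u) := by
  simp only [EReal.add_ne_bot_iff] at hfin
  have hshift : K (s - v) + K (b - u) ≤ K (s - u) + K (b - v) := by
    have := hK.add_le_add_shift (p := s - v) (q := s - u) (Δ := b - s) (by linarith)
      (by linarith) (hpos.imp (fun _ => ⟨by linarith [hv.2, ha.1], by linarith⟩)
        fun _ => ⟨by linarith, by linarith [hb.2, hu.1]⟩)
    simpa only [sub_add_sub_cancel'] using this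
  calc K (a - u) + K (b - u) + K (s - v) = K (a - u) + (K (s - v) + K (b - u)) := by ac_rfl
    _ < K (a - v) + (K (s - u) + K (b - v)) :=
      EReal.add_lt_add_of_lt_of_le (hK.lt_of_farther hSM hv hu ha (.inr ⟨hau, huv⟩)) hshift
        (EReal.add_ne_bot_iff.2 ⟨hfin.2, hfin.1.2⟩) (EReal.add_ne_top (hK.1 _) (hK.1 _))
    _ = K (a - v) + K (b - v) + K (s - u) := by ac_rfl

theorem add_add_lt_of_gt (hK : KernelFun K) (hSM : KStrictMonotone K) {u v a s b : ℝ}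
    (hu : u ∈ Icc (0 : ℝ) 1) (hv : v ∈ Icc (0 : ℝ) 1) (ha : a ∈ Icc (0 : ℝ) 1)
    (hb : b ∈ Icc (0 : ℝ) 1) (has : a ≤ s) (hsb : s ≤ b) (hvu : v < u) (hub : u ≤ b)
    (hpos : s ≤ v ∨ u ≤ a) (hfin : K (a - u) + K (b - u) + K (s - v) ≠ ⊥) :
    K (a - u) + K (b - u) + K (s - v) < K (a - v) + K (b - v) + K (s - u) := by
  simp only [EReal.add_ne_bot_iff] at hfin
  have hshift : K (a - u) + K (s - v) ≤ K (a - v) + K (s - u) := by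
    have := hK.add_le_add_shift (p := a - u) (q := a - v) (Δ := s - a) (by linarith)
      (by linarith) (hpos.imp (fun _ => ⟨by linarith [ha.1, hu.2], by linarith⟩)
        fun _ => ⟨by linarith, by linarith [hb.2, hv.1]⟩)
    simpa only [sub_add_sub_cancel'] using this
  calc K (a - u) + K (b - u) + K (s - v) = K (b - u) + (K (a - u) + K (s - v)) := by ac_rfl
    _ < K (b - v) + (K (a - v) + K (s - u)) :=
      EReal.add_lt_add_of_lt_of_le (hK.lt_of_farther hSM hv hu hb (.inl ⟨hvu, hub⟩)) hshift
        (EReal.add_ne_bot_iff.2 ⟨hfin.1.1, hfin.2⟩) (EReal.add_ne_top (hK.1 _) (hK.1 _))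
    _ = K (a - v) + K (b - v) + K (s - u) := by ac_rfl

theorem continuousOn_comp_sub (hK : KernelFun K) {a : ℝ} (ha : a ∈ Icc (0 : ℝ) 1) :
    ContinuousOn (fun t => K (t - a)) (Icc 0 1) := by
  obtain ⟨-, -, -, -, hcont₁, hcont₂⟩ := hK
  rw [← Icc_union_Icc_eq_Icc ha.1 ha.2]
  refine ContinuousOn.union_of_isClosed ?_ ?_ isClosed_Icc isClosed_Icc
  · exact hcont₁.comp (continuousOn_id.sub continuousOn_const)
      fun t ht => ⟨by linarith [ht.1, ha.2], by linarith [ht.2]⟩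
  · exact hcont₂.comp (continuousOn_id.sub continuousOn_const)
      fun t ht => ⟨by linarith [ht.1], by linarith [ht.2, ha.1]⟩

end KernelFun

section Nodes

variable {n : ℕ} {x : Fin n → ℝ}

theorem extNodes_castSucc_succ (i : Fin n) : extNodes n x i.castSucc.succ = x i := by
  simp [extNodes]

theorem exists_mem_interval_extNodes {t : ℝ} (ht : t ∈ Icc (0 : ℝ) 1) :
    ∃ j : Fin (n + 1), t ∈ Icc (extNodes n x j.castSucc) (extNodes n x j.succ) :=
  Fin.exists_mem_Icc_castSucc_succ (extNodes n x) (by simpa [extNodes] using ht)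

namespace closedSimplex

theorem extNodes_mem (hx : closedSimplex n x) (k : Fin (n + 2)) :
    extNodes n x k ∈ Icc (0 : ℝ) 1 := by
  induction k using Fin.cases with
  | zero => simp [extNodes]
  | succ k =>
    induction k using Fin.lastCases with
    | last => simp [extNodes]
    | cast i => simpa [extNodes] using hx.1 i

theorem monotone_extNodes (hx : closedSimplex n x) : Monotone (extNodes n x) :=
  Fin.monotone_cons (Fin.monotone_snoc hx.2 fun i => (hx.1 i).2)
    fun k => by simpa [extNodes] using (hx.extNodes_mem k.succ).1

theorem interval_subset (hx : closedSimplex n x) (j : Fin (n + 1)) :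
    Icc (extNodes n x j.castSucc) (extNodes n x j.succ) ⊆ Icc 0 1 :=
  Icc_subset_Icc (hx.extNodes_mem _).1 (hx.extNodes_mem _).2

theorem node_le_of_mem_interval (hx : closedSimplex n x) {j : Fin (n + 1)} {t : ℝ}
    (ht : t ∈ Icc (extNodes n x j.castSucc) (extNodes n x j.succ)) {i : Fin n}
    (hij : (i : ℕ) < j) : x i ≤ t :=
  extNodes_castSucc_succ (x := x) i ▸
    (hx.monotone_extNodes (Fin.le_def.2 (by simp; omega))).trans ht.1

theorem le_node_of_mem_interval (hx : closedSimplex n x) {j : Fin (n + 1)} {t : ℝ}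
    (ht : t ∈ Icc (extNodes n x j.castSucc) (extNodes n x j.succ)) {i : Fin n}
    (hji : (j : ℕ) ≤ i) : t ≤ x i :=
  extNodes_castSucc_succ (x := x) i ▸
    ht.2.trans (hx.monotone_extNodes (Fin.le_def.2 (by simp; omega)))

end closedSimplex

end Nodes

section Patterns

variable {n : ℕ} (x y : Fin n → ℝ)

theorem exists_split_or_inversion :
    (∃ j : Fin (n + 1), ∀ i : Fin n, ((i : ℕ) < j → x i ≤ y i) ∧ ((j : ℕ) ≤ i → y i ≤ x i)) ∨
      ∃ i k : Fin n, i < k ∧ y i < x i ∧ x k < y k := by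
  by_cases hinv : ∃ i k : Fin n, i < k ∧ y i < x i ∧ x k < y k
  · exact .inr hinv
  push Not at hinv
  left
  by_cases hR : ∃ i, y i < x i
  · obtain ⟨i₀, hi₀, hmin⟩ := wellFounded_lt.has_min {i | y i < x i} hR
    refine ⟨i₀.castSucc, fun i => ⟨fun h => not_lt.1 fun hlt => hmin i hlt h, fun h => ?_⟩⟩
    rcases (Fin.le_def.2 h : i₀ ≤ i).eq_or_lt with rfl | hlt
    exacts [hi₀.le, hinv i₀ i hlt hi₀]
  · push Not at hR
    exact ⟨Fin.last n, fun i => ⟨fun _ => hR i, fun h => absurd h (by simp)⟩⟩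

variable {x y}

theorem exists_alternating_triple (hRL : ∃ i k : Fin n, i < k ∧ y i < x i ∧ x k < y k)
    (hLR : ∃ i k : Fin n, i < k ∧ x i < y i ∧ y k < x k) :
    ∃ p q r : Fin n, p < q ∧ q < r ∧
      ((x p < y p ∧ y q < x q ∧ x r < y r) ∨ (y p < x p ∧ x q < y q ∧ y r < x r)) := by
  obtain ⟨i, k, hik, hRi, hLk⟩ := hRL
  obtain ⟨i', k', hik', hLi', hRk'⟩ := hLR
  rcases lt_or_ge k k' with hkk' | hk'k
  · exact ⟨i, k, k', hik, hkk', .inr ⟨hRi, hLk, hRk'⟩⟩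
  · have hne : k' ≠ k := fun h => (h ▸ hRk').asymm hLk
    exact ⟨i', k', k, hik', lt_of_le_of_ne hk'k hne, .inl ⟨hLi', hRk', hLk⟩⟩

end Patterns

section Equioscillation

variable {n : ℕ} {ν : Fin n → ℝ} {K J : ℝ → EReal} {x y : Fin n → ℝ} {c c' : EReal}

theorem sumTrans_ne_top (hν : ∀ i, 0 ≤ ν i) (hK : ∀ t, K t ≠ ⊤) (hJ : ∀ t, J t ≠ ⊤) (t : ℝ) :
    sumTrans n ν K J x t ≠ ⊤ :=
  EReal.add_ne_top (hJ t) (EReal.sum_ne_top_s13 fun i _ => EReal.coe_mul_ne_top_s13 (hν i) (hK _))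

theorem sumTrans_ne_bot (hν : ∀ i, 0 < ν i) {t : ℝ} (h : sumTrans n ν K J x t ≠ ⊥) :
    J t ≠ ⊥ ∧ ∀ i, K (t - x i) ≠ ⊥ := by
  classical
  rw [sumTrans, EReal.add_ne_bot_iff] at h
  refine ⟨h.1, fun i hi => h.2 ?_⟩
  rw [← Finset.add_sum_erase _ _ (Finset.mem_univ i), hi, EReal.coe_mul_bot_of_pos (hν i),
    EReal.bot_add]

theorem upperSemicontinuousOn_sumTrans_s13 (hK : KernelFun K) (hJ : ∀ t, J t ≠ ⊤)
    (hJusc : UpperSemicontinuousOn J (Icc 0 1)) (hν : ∀ i, 0 ≤ ν i) (hx : closedSimplex n x) :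
    UpperSemicontinuousOn (sumTrans n ν K J x) (Icc 0 1) := by
  have hterm : ∀ i, ContinuousOn (fun t => (ν i : EReal) * K (t - x i)) (Icc 0 1) :=
    fun i t ht => EReal.Tendsto.const_mul (hK.continuousOn_comp_sub (hx.1 i) t ht)
      (.inl (EReal.coe_ne_bot _)) (.inl (EReal.coe_ne_top _))
  refine hJusc.add' (EReal.upperSemicontinuousOn_sum_s13 (fun i _ => (hterm i).upperSemicontinuousOn)
    fun i _ t _ => EReal.coe_mul_ne_top_s13 (hν i) (hK.1 _)) fun t _ =>
    EReal.continuousAt_add (.inl (hJ t))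
      (.inr (show ∑ i, (ν i : EReal) * K (t - x i) ≠ ⊤ from
        EReal.sum_ne_top_s13 fun i _ => EReal.coe_mul_ne_top_s13 (hν i) (hK.1 _)))

theorem sumTrans_le_of_intMax_eq (hxc : ∀ j, intMax n ν K J x j = c) {t : ℝ}
    (ht : t ∈ Icc (0 : ℝ) 1) : sumTrans n ν K J x t ≤ c := by
  obtain ⟨j, hj⟩ := exists_mem_interval_extNodes (x := x) ht
  exact hxc j ▸ le_sSup (mem_image_of_mem _ hj)

theorem exists_sumTrans_eq_intMax (hK : KernelFun K) (hJ : ∀ t, J t ≠ ⊤)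
    (hJusc : UpperSemicontinuousOn J (Icc 0 1)) (hν : ∀ i, 0 ≤ ν i) (hx : closedSimplex n x)
    (j : Fin (n + 1)) : ∃ t ∈ Icc (extNodes n x j.castSucc) (extNodes n x j.succ),
      sumTrans n ν K J x t = intMax n ν K J x j := by
  obtain ⟨t, ht, hmax⟩ := ((upperSemicontinuousOn_sumTrans_s13 hK hJ hJusc hν hx).mono
    (hx.interval_subset j)).exists_isMaxOn
    (nonempty_Icc.2 (hx.monotone_extNodes Fin.castSucc_lt_succ.le)) isCompact_Icc
  exact ⟨t, ht, (IsGreatest.csSup_eq ⟨mem_image_of_mem _ ht,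
    forall_mem_image.2 fun _ hu => hmax hu⟩).symm⟩

theorem sumTrans_lt_sumTrans_s13 (hK : KernelFun K) (hSM : KStrictMonotone K) (hJ : ∀ t, J t ≠ ⊤)
    (hν : ∀ i, 0 < ν i) (hx : ∀ i, x i ∈ Icc (0 : ℝ) 1) (hy : ∀ i, y i ∈ Icc (0 : ℝ) 1)
    {s : ℝ} (hs : s ∈ Icc (0 : ℝ) 1)
    (hpos : ∀ i, x i = y i ∨ (x i < y i ∧ y i ≤ s) ∨ (s ≤ y i ∧ y i < x i)) (hne : x ≠ y)
    (hfin : sumTrans n ν K J y s ≠ ⊥) : sumTrans n ν K J y s < sumTrans n ν K J x s := by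
  obtain ⟨i₀, hi₀⟩ := Function.ne_iff.1 hne
  have hlt : ∀ i, x i ≠ y i → K (s - y i) < K (s - x i) := fun i hi =>
    hK.lt_of_farther hSM (hx i) (hy i) hs ((hpos i).resolve_left hi)
  have hsum := EReal.sum_coe_mul_lt_sum_coe_mul hν
    (fun i => (eq_or_ne (x i) (y i)).elim (fun h => h ▸ le_rfl) fun h => (hlt i h).le)
    (hlt i₀ hi₀) (sumTrans_ne_bot hν hfin).2 fun i => hK.1 _
  have hJs := (sumTrans_ne_bot hν hfin).1
  rw [sumTrans, sumTrans]
  lift J s to ℝ using ⟨hJ s, hJs⟩ with r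
  exact EReal.add_lt_add_left_coe hsum r

theorem lt_of_split (hK : KernelFun K) (hSM : KStrictMonotone K) (hJ : ∀ t, J t ≠ ⊤)
    (hJusc : UpperSemicontinuousOn J (Icc 0 1)) (hν : ∀ i, 0 < ν i) (hx : closedSimplex n x)
    (hy : closedSimplex n y) (hxc : ∀ j, intMax n ν K J x j = c)
    (hyc : ∀ j, intMax n ν K J y j = c') (hc' : c' ≠ ⊥) (j : Fin (n + 1))
    (hsplit : ∀ i : Fin n, ((i : ℕ) < j → x i ≤ y i) ∧ ((j : ℕ) ≤ i → y i ≤ x i))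
    (hne : x ≠ y) : c' < c := by
  obtain ⟨s, hs, hys⟩ := exists_sumTrans_eq_intMax hK hJ hJusc (fun i => (hν i).le) hy j
  rw [hyc] at hys
  have hpos : ∀ i, x i = y i ∨ (x i < y i ∧ y i ≤ s) ∨ (s ≤ y i ∧ y i < x i) := by
    intro i
    by_cases hi : (i : ℕ) < j
    · rcases ((hsplit i).1 hi).eq_or_lt with h | h
      exacts [.inl h, .inr (.inl ⟨h, hy.node_le_of_mem_interval hs hi⟩)]
    · rcases ((hsplit i).2 (not_lt.1 hi)).eq_or_lt with h | h
      exacts [.inl h.symm, .inr (.inr ⟨hy.le_node_of_mem_interval hs (not_lt.1 hi), h⟩)]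
  calc c' = sumTrans n ν K J y s := hys.symm
    _ < sumTrans n ν K J x s :=
      sumTrans_lt_sumTrans_s13 hK hSM hJ hν hx.1 hy.1 (hy.interval_subset j hs) hpos hne (hys ▸ hc')
    _ ≤ c := sumTrans_le_of_intMax_eq hxc (hy.interval_subset j hs)

theorem sumTrans_add_add (hν : ∀ i, 0 ≤ ν i) (a b s : ℝ) :
    sumTrans n ν K J x a + sumTrans n ν K J x b + sumTrans n ν K J y s =
      ∑ i, (ν i : EReal) * (K (a - x i) + K (b - x i) + K (s - y i)) + (J a + J b + J s) := by
  have hdistrib : ∀ i (u v : EReal), (ν i : EReal) * (u + v) = ν i * u + ν i * v := fun i =>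
    EReal.left_distrib_of_nonneg_of_ne_top (mod_cast hν i) (EReal.coe_ne_top _)
  simp only [sumTrans, hdistrib, Finset.sum_add_distrib]
  abel

theorem lt_of_three_points (hK : KernelFun K) (hSM : KStrictMonotone K) (hJ : ∀ t, J t ≠ ⊤)
    (hν : ∀ i, 0 < ν i) (hx : ∀ i, x i ∈ Icc (0 : ℝ) 1) (hy : ∀ i, y i ∈ Icc (0 : ℝ) 1)
    {a s b : ℝ} (ha : a ∈ Icc (0 : ℝ) 1) (hb : b ∈ Icc (0 : ℝ) 1) (has : a ≤ s) (hsb : s ≤ b)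
    (hxa : sumTrans n ν K J x a = c) (hxb : sumTrans n ν K J x b = c)
    (hys : sumTrans n ν K J y s = c') (hya : sumTrans n ν K J y a ≤ c')
    (hyb : sumTrans n ν K J y b ≤ c') (hxs : sumTrans n ν K J x s ≤ c) (hc : c ≠ ⊥)
    (hc' : c' ≠ ⊥)
    (hpos : ∀ i, x i = y i ∨ (x i < y i ∧ a ≤ x i ∧ (b ≤ x i ∨ y i ≤ s)) ∨
      (y i < x i ∧ x i ≤ b ∧ (s ≤ y i ∨ x i ≤ a)))
    (hne : x ≠ y) : c < c' := by
  have hν' : ∀ i, 0 ≤ ν i := fun i => (hν i).le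
  obtain ⟨i₀, hi₀⟩ := Function.ne_iff.1 hne
  obtain ⟨hJa, hKa⟩ := sumTrans_ne_bot hν (hxa ▸ hc)
  obtain ⟨hJb, hKb⟩ := sumTrans_ne_bot hν (hxb ▸ hc)
  obtain ⟨hJs, hKs⟩ := sumTrans_ne_bot hν (hys ▸ hc')
  have hfin : ∀ i, K (a - x i) + K (b - x i) + K (s - y i) ≠ ⊥ := fun i =>
    EReal.add_ne_bot_iff.2 ⟨EReal.add_ne_bot_iff.2 ⟨hKa i, hKb i⟩, hKs i⟩
  have hlt : ∀ i, x i ≠ y i →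
      K (a - x i) + K (b - x i) + K (s - y i) < K (a - y i) + K (b - y i) + K (s - x i) := by
    intro i hi
    rcases (hpos i).resolve_left hi with ⟨hxy, hax, hpos⟩ | ⟨hyx, hxb, hpos⟩
    · exact hK.add_add_lt_of_lt hSM (hx i) (hy i) ha hb has hsb hxy hax hpos (hfin i)
    · exact hK.add_add_lt_of_gt hSM (hx i) (hy i) ha hb has hsb hyx hxb hpos (hfin i)
  have hsum := EReal.sum_coe_mul_lt_sum_coe_mul hν
    (fun i => (eq_or_ne (x i) (y i)).elim (fun h => h ▸ le_rfl) fun h => (hlt i h).le)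
    (hlt i₀ hi₀) hfin fun i => EReal.add_ne_top (EReal.add_ne_top (hK.1 _) (hK.1 _)) (hK.1 _)
  have key : sumTrans n ν K J x a + sumTrans n ν K J x b + sumTrans n ν K J y s <
      sumTrans n ν K J y a + sumTrans n ν K J y b + sumTrans n ν K J x s := by
    rw [sumTrans_add_add hν', sumTrans_add_add hν']
    exact EReal.add_lt_add_of_lt_of_le hsum le_rfl
      (EReal.add_ne_bot_iff.2 ⟨EReal.add_ne_bot_iff.2 ⟨hJa, hJb⟩, hJs⟩)
      (EReal.add_ne_top (EReal.add_ne_top (hJ a) (hJ b)) (hJ s))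
  rw [hxa, hxb, hys] at key
  have hcc := key.trans_le (add_le_add (add_le_add hya hyb) hxs)
  lift c to ℝ using ⟨hxa ▸ sumTrans_ne_top hν' hK.1 hJ a, hc⟩
  lift c' to ℝ using ⟨hys ▸ sumTrans_ne_top hν' hK.1 hJ s, hc'⟩
  norm_cast at hcc ⊢
  linarith

-- Node `i` separates the intervals `i` and `i + 1`.
theorem lt_of_test_intervals (hK : KernelFun K) (hSM : KStrictMonotone K) (hJ : ∀ t, J t ≠ ⊤)
    (hJusc : UpperSemicontinuousOn J (Icc 0 1)) (hν : ∀ i, 0 < ν i) (hx : closedSimplex n x)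
    (hy : closedSimplex n y) (hxc : ∀ j, intMax n ν K J x j = c)
    (hyc : ∀ j, intMax n ν K J y j = c') (hc : c ≠ ⊥) (hc' : c' ≠ ⊥) (ja js jb : Fin (n + 1))
    (hL : ∃ i : Fin n, x i < y i ∧ (ja : ℕ) ≤ i ∧ (i : ℕ) < js)
    (hR : ∃ i : Fin n, y i < x i ∧ (js : ℕ) ≤ i ∧ (i : ℕ) < jb)
    (hpos : ∀ i : Fin n, x i = y i ∨ (x i < y i ∧ (ja : ℕ) ≤ i ∧ ((jb : ℕ) ≤ i ∨ (i : ℕ) < js)) ∨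
      (y i < x i ∧ (i : ℕ) < jb ∧ ((js : ℕ) ≤ i ∨ (i : ℕ) < ja))) :
    c < c' := by
  have hν' : ∀ i, 0 ≤ ν i := fun i => (hν i).le
  obtain ⟨a, ha, hxa⟩ := exists_sumTrans_eq_intMax hK hJ hJusc hν' hx ja
  obtain ⟨b, hb, hxb⟩ := exists_sumTrans_eq_intMax hK hJ hJusc hν' hx jb
  obtain ⟨s, hs, hys⟩ := exists_sumTrans_eq_intMax hK hJ hJusc hν' hy js
  rw [hxc] at hxa hxb
  rw [hyc] at hys
  obtain ⟨iL, hxyL, hjaL, hjsL⟩ := hL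
  obtain ⟨iR, hyxR, hjsR, hjbR⟩ := hR
  refine lt_of_three_points hK hSM hJ hν hx.1 hy.1 (hx.interval_subset ja ha)
    (hx.interval_subset jb hb)
    ((hx.le_node_of_mem_interval ha hjaL).trans
      (hxyL.le.trans (hy.node_le_of_mem_interval hs hjsL)))
    ((hy.le_node_of_mem_interval hs hjsR).trans
      (hyxR.le.trans (hx.node_le_of_mem_interval hb hjbR)))
    hxa hxb hys (sumTrans_le_of_intMax_eq hyc (hx.interval_subset ja ha))
    (sumTrans_le_of_intMax_eq hyc (hx.interval_subset jb hb))
    (sumTrans_le_of_intMax_eq hxc (hy.interval_subset js hs)) hc hc' (fun i => ?_)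
    (fun h => (h ▸ hxyL).false)
  rcases hpos i with h | ⟨hxy, hja, h⟩ | ⟨hyx, hjb, h⟩
  · exact .inl h
  · exact .inr (.inl ⟨hxy, hx.le_node_of_mem_interval ha hja,
      h.imp (hx.le_node_of_mem_interval hb) (hy.node_le_of_mem_interval hs)⟩)
  · exact .inr (.inr ⟨hyx, hx.node_le_of_mem_interval hb hjb,
      h.imp (hy.le_node_of_mem_interval hs) (hx.node_le_of_mem_interval ha)⟩)

theorem false_of_split (hK : KernelFun K) (hSM : KStrictMonotone K) (hJ : ∀ t, J t ≠ ⊤)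
    (hJusc : UpperSemicontinuousOn J (Icc 0 1)) (hν : ∀ i, 0 < ν i) (hx : closedSimplex n x)
    (hy : closedSimplex n y) (hxc : ∀ j, intMax n ν K J x j = c)
    (hyc : ∀ j, intMax n ν K J y j = c') (hc : c ≠ ⊥) (hc' : c' ≠ ⊥) (j : Fin (n + 1))
    (hsplit : ∀ i : Fin n, ((i : ℕ) < j → x i ≤ y i) ∧ ((j : ℕ) ≤ i → y i ≤ x i))
    (hne : x ≠ y) : False := by
  have hlt := lt_of_split hK hSM hJ hJusc hν hx hy hxc hyc hc' j hsplit hne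
  by_cases hmixed : (∃ i, x i < y i) ∧ ∃ i, y i < x i
  · obtain ⟨⟨iL, hL⟩, ⟨iR, hR⟩⟩ := hmixed
    have hiL : (iL : ℕ) < j := not_le.1 fun h => ((hsplit iL).2 h).not_gt hL
    have hiR : (j : ℕ) ≤ iR := not_lt.1 fun h => ((hsplit iR).1 h).not_gt hR
    refine hlt.not_gt (lt_of_test_intervals hK hSM hJ hJusc hν hx hy hxc hyc hc hc' 0 j
      (Fin.last n) ⟨iL, hL, by simp, hiL⟩ ⟨iR, hR, hiR, by simp⟩ fun i => ?_)
    by_cases hi : (i : ℕ) < j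
    · rcases ((hsplit i).1 hi).eq_or_lt with h | h
      exacts [.inl h, .inr (.inl ⟨h, by simp, .inr hi⟩)]
    · rcases ((hsplit i).2 (not_lt.1 hi)).eq_or_lt with h | h
      exacts [.inl h.symm, .inr (.inr ⟨h, by simp, .inl (not_lt.1 hi)⟩)]
  · obtain ⟨j', hj'⟩ : ∃ j' : Fin (n + 1),
        ∀ i : Fin n, ((i : ℕ) < j' → y i ≤ x i) ∧ ((j' : ℕ) ≤ i → x i ≤ y i) := by
      rw [not_and_or, not_exists, not_exists] at hmixed
      rcases hmixed with h | h
      · exact ⟨Fin.last n, fun i => ⟨fun _ => not_lt.1 (h i), fun hi => absurd hi (by simp)⟩⟩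
      · exact ⟨0, fun i => ⟨fun hi => absurd hi (by simp), fun _ => not_lt.1 (h i)⟩⟩
    exact hlt.not_gt (lt_of_split hK hSM hJ hJusc hν hy hx hyc hxc hc j' hj' (Ne.symm hne))

theorem false_of_alternating {ν : Fin 3 → ℝ} {x y : Fin 3 → ℝ} (hK : KernelFun K)
    (hSM : KStrictMonotone K) (hJ : ∀ t, J t ≠ ⊤) (hJusc : UpperSemicontinuousOn J (Icc 0 1))
    (hν : ∀ i, 0 < ν i) (hx : closedSimplex 3 x) (hy : closedSimplex 3 y)
    (hxc : ∀ j, intMax 3 ν K J x j = c) (hyc : ∀ j, intMax 3 ν K J y j = c') (hc : c ≠ ⊥)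
    (hc' : c' ≠ ⊥) (h₀ : x 0 < y 0) (h₁ : y 1 < x 1) (h₂ : x 2 < y 2) : False := by
  have hlt : c < c' := lt_of_test_intervals hK hSM hJ hJusc hν hx hy hxc hyc hc hc' 0 1 2
    ⟨0, h₀, by decide, by decide⟩ ⟨1, h₁, by decide, by decide⟩ fun i => by
      fin_cases i
      exacts [.inr (.inl ⟨h₀, by decide, .inr (by decide)⟩),
        .inr (.inr ⟨h₁, by decide, .inl (by decide)⟩),
        .inr (.inl ⟨h₂, by decide, .inl (by decide)⟩)]
  have hgt : c' < c := lt_of_test_intervals hK hSM hJ hJusc hν hy hx hyc hxc hc' hc 1 2 3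
    ⟨1, h₁, by decide, by decide⟩ ⟨2, h₂, by decide, by decide⟩ fun i => by
      fin_cases i
      exacts [.inr (.inr ⟨h₀, by decide, .inr (by decide)⟩),
        .inr (.inl ⟨h₁, by decide, .inr (by decide)⟩),
        .inr (.inr ⟨h₂, by decide, .inl (by decide)⟩)]
  exact hlt.not_gt hgt

end Equioscillation

theorem equioscillation_unique_general (n : ℕ) (hn : n = 1 ∨ n = 2 ∨ n = 3)
    (ν : Fin n → ℝ) (hν : ∀ i, 0 < ν i)
    (K J : ℝ → EReal) (hK : KernelFun K) (hSM : KStrictMonotone K)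
    (hJ : NFieldFun n J) (hJusc : UpperSemicontinuousOn J (Icc (0:ℝ) 1))
    (w w' : Fin n → ℝ) (hw : closedSimplex n w) (hw' : closedSimplex n w')
    (heqw : ∀ j k, intMax n ν K J w j = intMax n ν K J w k)
    (hfinw : ∀ j, intMax n ν K J w j ≠ ⊥)
    (heqw' : ∀ j k, intMax n ν K J w' j = intMax n ν K J w' k)
    (hfinw' : ∀ j, intMax n ν K J w' j ≠ ⊥) :
    w = w' := by
  by_contra hne
  have hc := fun j => heqw j 0
  have hc' := fun j => heqw' j 0
  rcases exists_split_or_inversion w w' with ⟨j, hj⟩ | hRL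
  · exact false_of_split hK hSM hJ.1 hJusc hν hw hw' hc hc' (hfinw 0) (hfinw' 0) j hj hne
  rcases exists_split_or_inversion w' w with ⟨j, hj⟩ | hLR
  · exact false_of_split hK hSM hJ.1 hJusc hν hw' hw hc' hc (hfinw' 0) (hfinw 0) j hj
      (Ne.symm hne)
  obtain ⟨p, q, r, hpq, hqr, hpattern⟩ := exists_alternating_triple hRL hLR
  obtain rfl : n = 3 := by omega
  obtain ⟨rfl, rfl, rfl⟩ : p = 0 ∧ q = 1 ∧ r = 2 := by omega
  rcases hpattern with ⟨h₀, h₁, h₂⟩ | ⟨h₀, h₁, h₂⟩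
  · exact false_of_alternating hK hSM hJ.1 hJusc hν hw hw' hc hc' (hfinw 0) (hfinw' 0) h₀ h₁ h₂
  · exact false_of_alternating hK hSM hJ.1 hJusc hν hw' hw hc' hc (hfinw' 0) (hfinw 0) h₀ h₁ h₂

/-- For `n ∈ {1,2,3}` there is at most one equioscillation point. -/
theorem equioscillation_unique (n : ℕ) (hn : n = 1 ∨ n = 2 ∨ n = 3)
    (ν : Fin n → ℝ) (hν : ∀ i, 0 < ν i)
    (K J : ℝ → EReal) (hK : KernelFun K) (hSC : KStrictConcave K) (hSM : KStrictMonotone K)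
    (hJ : NFieldFun n J) (hJusc : UpperSemicontinuousOn J (Icc (0:ℝ) 1))
    (w w' : Fin n → ℝ) (hw : closedSimplex n w) (hw' : closedSimplex n w')
    (heqw : ∀ j k, intMax n ν K J w j = intMax n ν K J w k)
    (hfinw : ∀ j, intMax n ν K J w j ≠ ⊥)
    (heqw' : ∀ j k, intMax n ν K J w' j = intMax n ν K J w' k)
    (hfinw' : ∀ j, intMax n ν K J w' j ≠ ⊥) :
    w = w' :=
  equioscillation_unique_general n hn ν hν K J hK hSM hJ hJusc w w' hw hw' heqw hfinw heqw' hfinw'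
end
end

section
/- If for any distinct pair of regular node systems with n-1 nodes and any upper semicontinuous (n-1)-field function intertwining of maxima holds, then for an upper semicontinuous n-field function J and two distinct regular node systems x ≠ y with n nodes sharing a common coordinate xᵢ = yᵢ, intertwining of maxima also holds for x and y. (Reduction: set J*(t) := J(t) + νᵢK(t - xᵢ), delete the i-th node; then m*ⱼ equals mⱼ for j < i, max(mᵢ, mᵢ₊₁) for j = i, and mⱼ₊₁ for j > i.) -/
open Set

noncomputable section

section AuxLemmas

lemma succAbove_val' {m : ℕ} (p : Fin (m+1)) (k : Fin m) :
    ((p.succAbove k : Fin (m+1)) : ℕ) = if (k:ℕ) < (p:ℕ) then (k:ℕ) else (k:ℕ)+1 := by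
  rcases lt_or_ge ((k:ℕ)) ((p:ℕ)) with h | h
  · rw [Fin.succAbove_of_castSucc_lt p k (by simpa [Fin.lt_def] using h)]
    simp [h]
  · rw [Fin.succAbove_of_le_castSucc p k (by simpa [Fin.le_def] using h)]
    simp [Fin.val_succ, not_lt.2 h]

lemma extNodes_eq {n : ℕ} (z : Fin n → ℝ) (k : Fin (n+2)) :
    extNodes n z k =
      if h0 : (k:ℕ) = 0 then 0 else if h1 : (k:ℕ) = n+1 then 1
        else z ⟨(k:ℕ)-1, by have := k.isLt; omega⟩ := by
  rcases k with ⟨kv, hkv⟩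
  cases kv with
  | zero => simp [extNodes, show ((⟨0,hkv⟩ : Fin (n+2))) = 0 from rfl]
  | succ v =>
    have hL : extNodes n z ⟨v+1, hkv⟩ = Fin.snoc (α := fun _ : Fin (n+1) => ℝ) z 1 (⟨v, by omega⟩ : Fin (n+1)) := by
      have h1 : ((⟨v+1, hkv⟩ : Fin (n+2))) = Fin.succ (⟨v, by omega⟩ : Fin (n+1)) := rfl
      rw [extNodes, h1, Fin.cons_succ]
    rw [hL]
    rw [dif_neg (show ¬(((⟨v+1, hkv⟩ : Fin (n+2)) : ℕ) = 0) from by simp)]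
    by_cases hv : v < n
    · rw [dif_neg (show ¬(((⟨v+1, hkv⟩ : Fin (n+2)) : ℕ) = n+1) from by simp; omega)]
      rw [Fin.snoc]
      rw [dif_pos (show ((⟨v, by omega⟩ : Fin (n+1)) : ℕ) < n from hv)]
      simp only [cast_eq]
      congr 1
    · rw [dif_pos (show (((⟨v+1, hkv⟩ : Fin (n+2)) : ℕ) = n+1) from by simp; omega)]
      rw [Fin.snoc]
      rw [dif_neg (show ¬(((⟨v, by omega⟩ : Fin (n+1)) : ℕ) < n) from hv)]
      simp only [cast_eq]

lemma extNodes_mem {n : ℕ} {z : Fin n → ℝ} (hz : closedSimplex n z) (k : Fin (n+2)) :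
    extNodes n z k ∈ Icc (0:ℝ) 1 := by
  rw [extNodes_eq]
  split_ifs
  · exact ⟨le_refl 0, by norm_num⟩
  · exact ⟨by norm_num, le_refl 1⟩
  · exact hz.1 _

lemma extNodes_mono {n : ℕ} {z : Fin n → ℝ} (hz : closedSimplex n z) :
    Monotone (extNodes n z) := by
  intro a b hab
  have hab' : (a:ℕ) ≤ (b:ℕ) := hab
  rw [extNodes_eq, extNodes_eq]
  have hz0 : ∀ j, 0 ≤ z j := fun j => (hz.1 j).1
  have hz1 : ∀ j, z j ≤ 1 := fun j => (hz.1 j).2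
  split_ifs with h1 h2 h3 h4 h5 h6 h7 h8
  any_goals rfl
  any_goals (exfalso; omega)
  any_goals norm_num
  any_goals exact hz0 _
  any_goals exact hz1 _
  · apply hz.2
    simp only [Fin.mk_le_mk]
    omega

end AuxLemmas
lemma extNodes_bot {n : ℕ} (z : Fin n → ℝ) (k : Fin (n+2)) (hk : (k:ℕ) = 0) :
    extNodes n z k = 0 := by rw [extNodes_eq, dif_pos hk]

lemma extNodes_top {n : ℕ} (z : Fin n → ℝ) (k : Fin (n+2)) (hk : (k:ℕ) = n+1) :
    extNodes n z k = 1 := by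
  rw [extNodes_eq, dif_neg (by omega), dif_pos hk]

lemma extNodes_node {n : ℕ} (z : Fin n → ℝ) (k : Fin (n+2)) (j : Fin n)
    (hj : (k:ℕ) = (j:ℕ)+1) : extNodes n z k = z j := by
  have hjn := j.isLt
  rw [extNodes_eq, dif_neg (by omega), dif_neg (by omega)]
  congr 1
  exact Fin.ext (by simp; omega)

lemma extNodes_comp {m : ℕ} (z : Fin (m+1) → ℝ) (i : Fin (m+1)) (k : Fin (m+2)) :
    extNodes m (z ∘ i.succAbove) k = extNodes (m+1) z ((i.succ.castSucc).succAbove k) := by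
  have hi := i.isLt
  have hk := k.isLt
  have hw : (((i.succ.castSucc).succAbove k : Fin (m+3)) : ℕ)
      = if (k:ℕ) < (i:ℕ)+1 then (k:ℕ) else (k:ℕ)+1 := by
    rw [succAbove_val']; simp
  by_cases h0 : (k:ℕ) = 0
  · rw [extNodes_bot _ _ h0, extNodes_bot _ _ (by rw [hw]; simp [h0])]
  · by_cases h1 : (k:ℕ) = m+1
    · rw [extNodes_top _ _ h1, extNodes_top _ _ (by rw [hw]; split_ifs <;> omega)]
    · have hlt : (k:ℕ) - 1 < m := by omega
      rw [extNodes_node _ _ (⟨(k:ℕ)-1, hlt⟩ : Fin m) (by simp; omega)]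
      show z (i.succAbove _) = _
      rw [extNodes_node _ _ (i.succAbove ⟨(k:ℕ)-1, hlt⟩) ?_]
      rw [hw, succAbove_val']
      split_ifs with u1 u2 u2 <;> simp only [Fin.val_mk] at u1 u2 ⊢ <;> omega
lemma sumTrans_split {m : ℕ} (ν : Fin (m+1) → ℝ) (K J : ℝ → EReal) (z : Fin (m+1) → ℝ)
    (i : Fin (m+1)) (t : ℝ) :
    sumTrans m (ν ∘ i.succAbove) K (fun s => J s + (ν i : EReal) * K (s - z i))
      (z ∘ i.succAbove) t = sumTrans (m+1) ν K J z t := by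
  unfold sumTrans
  rw [Fin.sum_univ_succAbove (fun j => ((ν j : EReal)) * K (t - z j)) i]
  simp only [Function.comp_apply]
  rw [add_assoc]

def lowIdx {m : ℕ} (i : Fin (m+1)) (j : Fin (m+1)) : Fin (m+2) :=
  if (j:ℕ) ≤ (i:ℕ) then j.castSucc else j.succ

def highIdx {m : ℕ} (i : Fin (m+1)) (j : Fin (m+1)) : Fin (m+2) :=
  if (j:ℕ) < (i:ℕ) then j.castSucc else j.succ

lemma lowIdx_val {m : ℕ} (i j : Fin (m+1)) :
    ((lowIdx i j : Fin (m+2)) : ℕ) = if (j:ℕ) ≤ (i:ℕ) then (j:ℕ) else (j:ℕ)+1 := by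
  unfold lowIdx; split_ifs <;> simp

lemma highIdx_val {m : ℕ} (i j : Fin (m+1)) :
    ((highIdx i j : Fin (m+2)) : ℕ) = if (j:ℕ) < (i:ℕ) then (j:ℕ) else (j:ℕ)+1 := by
  unfold highIdx; split_ifs <;> simp

lemma succAbove_helper {m : ℕ} (i j : Fin (m+1)) :
    (((i.succ.castSucc).succAbove j.castSucc : Fin (m+3)) : ℕ)
        = (if (j:ℕ) ≤ (i:ℕ) then (j:ℕ) else (j:ℕ)+1) ∧
    (((i.succ.castSucc).succAbove j.succ : Fin (m+3)) : ℕ)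
        = (if (j:ℕ) < (i:ℕ) then (j:ℕ) else (j:ℕ)+1) + 1 := by
  constructor <;>
  · rw [succAbove_val']
    simp only [Fin.coe_castSucc, Fin.val_succ]
    split_ifs <;> omega

lemma intMax_reduce {m : ℕ} (ν : Fin (m+1) → ℝ) (K J : ℝ → EReal) (z : Fin (m+1) → ℝ)
    (hz : closedSimplex (m+1) z) (i : Fin (m+1)) (j : Fin (m+1)) :
    intMax m (ν ∘ i.succAbove) K (fun s => J s + (ν i : EReal) * K (s - z i))
        (z ∘ i.succAbove) j
      = intMax (m+1) ν K J z (lowIdx i j) ⊔ intMax (m+1) ν K J z (highIdx i j) := by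
  have hF : sumTrans m (ν ∘ i.succAbove) K (fun s => J s + (ν i : EReal) * K (s - z i))
      (z ∘ i.succAbove) = sumTrans (m+1) ν K J z := funext (sumTrans_split ν K J z i)
  have hi := i.isLt
  have hj := j.isLt
  unfold intMax
  rw [hF, extNodes_comp, extNodes_comp]
  have e1 : (i.succ.castSucc).succAbove j.castSucc = (lowIdx i j).castSucc := by
    apply Fin.ext
    rw [(succAbove_helper i j).1]
    simp only [Fin.coe_castSucc, lowIdx_val]
  rw [e1]
  rcases eq_or_ne ((j:ℕ)) ((i:ℕ)) with hc | hc
  · -- j = i : merged interval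
    have e2 : (i.succ.castSucc).succAbove j.succ = (highIdx i j).succ := by
      apply Fin.ext
      rw [(succAbove_helper i j).2]
      simp only [Fin.val_succ, highIdx_val]
      all_goals first | omega | (split_ifs <;> omega)
    have e3 : (highIdx i j).castSucc = (lowIdx i j).succ := by
      apply Fin.ext
      simp only [Fin.coe_castSucc, Fin.val_succ, lowIdx_val, highIdx_val]
      all_goals first | omega | (split_ifs <;> omega)
    rw [e2]
    have hmono := extNodes_mono hz
    have hle1 : (lowIdx i j).castSucc ≤ (lowIdx i j).succ := by
      rw [Fin.le_def]; simp only [Fin.coe_castSucc, Fin.val_succ]; omega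
    have hle2 : (lowIdx i j).succ ≤ (highIdx i j).succ := by
      rw [Fin.le_def]; simp only [Fin.val_succ, lowIdx_val, highIdx_val]
      all_goals first | omega | (split_ifs <;> omega)
    have hIcc : Icc (extNodes (m+1) z (lowIdx i j).castSucc)
          (extNodes (m+1) z (highIdx i j).succ)
        = Icc (extNodes (m+1) z (lowIdx i j).castSucc) (extNodes (m+1) z (lowIdx i j).succ)
          ∪ Icc (extNodes (m+1) z (highIdx i j).castSucc)
              (extNodes (m+1) z (highIdx i j).succ) := by
      rw [e3]
      exact (Icc_union_Icc_eq_Icc (hmono hle1) (hmono hle2)).symm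
    rw [hIcc, image_union, sSup_union]
  · -- j ≠ i : single interval
    have e2 : (i.succ.castSucc).succAbove j.succ = (lowIdx i j).succ := by
      apply Fin.ext
      rw [(succAbove_helper i j).2]
      simp only [Fin.val_succ, lowIdx_val]
      all_goals first | omega | (split_ifs <;> omega)
    have e3 : lowIdx i j = highIdx i j := by
      apply Fin.ext; rw [lowIdx_val, highIdx_val]; all_goals first | omega | (split_ifs <;> omega)
    rw [e2, ← e3, sup_idem]
lemma ereal_mul_ne_top {r : ℝ} (hr : 0 < r) {a : EReal} (ha : a ≠ ⊤) :
    (r : EReal) * a ≠ ⊤ := by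
  induction a with
  | bot => rw [EReal.coe_mul_bot_of_pos hr]; exact bot_ne_top
  | coe a => rw [← EReal.coe_mul]; exact EReal.coe_ne_top _
  | top => exact absurd rfl ha

lemma ereal_mul_ne_bot {r : ℝ} (hr : 0 < r) {a : EReal} (ha : a ≠ ⊥) :
    (r : EReal) * a ≠ ⊥ := by
  induction a with
  | bot => exact absurd rfl ha
  | coe a => rw [← EReal.coe_mul]; exact EReal.coe_ne_bot _
  | top => rw [EReal.coe_mul_top_of_pos hr]; exact top_ne_bot

lemma ereal_le_coe_of_ne_top {a : EReal} (ha : a ≠ ⊤) : ∃ r : ℝ, a ≤ (r : EReal) := by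
  induction a with
  | bot => exact ⟨0, bot_le⟩
  | coe a => exact ⟨a, le_refl _⟩
  | top => exact absurd rfl ha

lemma kernel_bddAbove {K : ℝ → EReal} (hK : KernelFun K) :
    ∃ r : ℝ, ∀ s ∈ Icc (-1:ℝ) 1, K s ≤ (r : EReal) := by
  obtain ⟨s₁, hs₁, hmax₁⟩ := (isCompact_Icc (a := (-1:ℝ)) (b := 0)).exists_isMaxOn
    ⟨-1, by norm_num⟩ hK.2.2.2.2.1
  obtain ⟨s₂, hs₂, hmax₂⟩ := (isCompact_Icc (a := (0:ℝ)) (b := 1)).exists_isMaxOn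
    ⟨0, by norm_num⟩ hK.2.2.2.2.2
  obtain ⟨r₁, hr₁⟩ := ereal_le_coe_of_ne_top (hK.1 s₁)
  obtain ⟨r₂, hr₂⟩ := ereal_le_coe_of_ne_top (hK.1 s₂)
  refine ⟨max r₁ r₂, fun s hs => ?_⟩
  rcases le_or_gt s 0 with h | h
  · exact le_trans (le_trans (hmax₁ ⟨hs.1, h⟩) hr₁)
      (by exact_mod_cast EReal.coe_le_coe_iff.2 (le_max_left _ _))
  · exact le_trans (le_trans (hmax₂ ⟨h.le, hs.2⟩) hr₂)
      (by exact_mod_cast EReal.coe_le_coe_iff.2 (le_max_right _ _))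

lemma kernel_contOn {K : ℝ → EReal} (hK : KernelFun K) :
    ContinuousOn K (Icc (-1:ℝ) 1) := by
  have hsplit : Icc (-1:ℝ) 1 = Icc (-1:ℝ) 0 ∪ Icc (0:ℝ) 1 :=
    (Icc_union_Icc_eq_Icc (by norm_num) (by norm_num)).symm
  rw [hsplit]
  intro u hu
  have h1 : ContinuousWithinAt K (Icc (-1:ℝ) 0) u := by
    by_cases h : u ∈ Icc (-1:ℝ) 0
    · exact hK.2.2.2.2.1 u h
    · exact continuousWithinAt_of_notMem_closure (by rwa [IsClosed.closure_eq isClosed_Icc])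
  have h2 : ContinuousWithinAt K (Icc (0:ℝ) 1) u := by
    by_cases h : u ∈ Icc (0:ℝ) 1
    · exact hK.2.2.2.2.2 u h
    · exact continuousWithinAt_of_notMem_closure (by rwa [IsClosed.closure_eq isClosed_Icc])
  exact h1.union h2

lemma ereal_const_mul_continuous (r : ℝ) (hr : r ≠ 0) :
    Continuous (fun a : EReal => (r : EReal) * a) := by
  rw [continuous_iff_continuousAt]
  intro a
  have h : ContinuousAt (fun p : EReal × EReal => p.1 * p.2) ((r : EReal), a) :=
    EReal.continuousAt_mul (by simp [hr]) (by simp [hr])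
      (Or.inl (EReal.coe_ne_bot _)) (Or.inl (EReal.coe_ne_top _))
  exact h.comp (Continuous.continuousAt (by fun_prop))

lemma sup_lt_sup_ereal {a1 a2 b1 b2 : EReal} (h : a1 ⊔ a2 < b1 ⊔ b2) :
    a1 < b1 ∨ a2 < b2 := by
  by_contra hc
  push_neg at hc
  exact absurd (sup_le_sup hc.1 hc.2) (not_le_of_gt h)

/-- Reduction lemma: if intertwining holds for `n-1` nodes (for every upper semicontinuous
`(n-1)`-field function and positive weights), then intertwining holds for two distinct regular
`n`-node systems sharing a common coordinate. -/
theorem common_node_reduction (n : ℕ) (hn : 1 ≤ n)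
    (K : ℝ → EReal) (hK : KernelFun K) (hSC : KStrictConcave K) (hM : KMonotone K)
    (H : ∀ J' : ℝ → EReal, NFieldFun (n - 1) J' →
      UpperSemicontinuousOn J' (Icc (0:ℝ) 1) →
      ∀ ν' : Fin (n - 1) → ℝ, (∀ i, 0 < ν' i) →
      ∀ x' y' : Fin (n - 1) → ℝ, closedSimplex (n - 1) x' → closedSimplex (n - 1) y' →
        regularNodes (n - 1) ν' K J' x' → regularNodes (n - 1) ν' K J' y' → x' ≠ y' →
        ∃ i j, intMax (n - 1) ν' K J' x' i < intMax (n - 1) ν' K J' y' i ∧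
          intMax (n - 1) ν' K J' y' j < intMax (n - 1) ν' K J' x' j)
    (ν : Fin n → ℝ) (hν : ∀ i, 0 < ν i)
    (J : ℝ → EReal) (hJ : NFieldFun n J) (hJusc : UpperSemicontinuousOn J (Icc (0:ℝ) 1))
    (x y : Fin n → ℝ) (hx : closedSimplex n x) (hy : closedSimplex n y)
    (hxr : regularNodes n ν K J x) (hyr : regularNodes n ν K J y) (hne : x ≠ y)
    (i : Fin n) (hshare : x i = y i) :
    ∃ i j, intMax n ν K J x i < intMax n ν K J y i ∧
      intMax n ν K J y j < intMax n ν K J x j := by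
  obtain ⟨m, rfl⟩ : ∃ m, n = m + 1 := ⟨n - 1, (Nat.succ_pred_eq_of_pos hn).symm⟩
  have hc01 : x i ∈ Icc (0:ℝ) 1 := hx.1 i
  -- the key interval-maximum identities
  have hkeyx : ∀ j, intMax m (ν ∘ i.succAbove) K
        (fun s => J s + (ν i : EReal) * K (s - x i)) (x ∘ i.succAbove) j
      = intMax (m+1) ν K J x (lowIdx i j) ⊔ intMax (m+1) ν K J x (highIdx i j) :=
    intMax_reduce ν K J x hx i
  have hkeyy : ∀ j, intMax m (ν ∘ i.succAbove) K
        (fun s => J s + (ν i : EReal) * K (s - x i)) (y ∘ i.succAbove) j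
      = intMax (m+1) ν K J y (lowIdx i j) ⊔ intMax (m+1) ν K J y (highIdx i j) := by
    intro j
    rw [hshare]
    exact intMax_reduce ν K J y hy i j
  obtain ⟨hJtop, ⟨M, hMb⟩, hfin⟩ := hJ
  obtain ⟨r, hr⟩ := kernel_bddAbove hK
  have hgtop : ∀ t : ℝ, (ν i : EReal) * K (t - x i) ≠ ⊤ :=
    fun t => ereal_mul_ne_top (hν i) (hK.1 _)
  have hKneBot : ∀ s : ℝ, -1 < s → s < 1 → s ≠ 0 → K s ≠ ⊥ := by
    intro s h1 h2 h3
    refine hK.2.1 s ?_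
    rcases lt_or_gt_of_ne h3 with h | h
    · exact Or.inl ⟨h1, h⟩
    · exact Or.inr ⟨h, h2⟩
  have hsurv : ∀ t : ℝ, t ∈ Ioo (0:ℝ) 1 → t ≠ x i → J t ≠ ⊥ →
      J t + (ν i : EReal) * K (t - x i) ≠ ⊥ := by
    intro t ht htc hJt
    rw [Ne, EReal.add_eq_bot_iff]
    push_neg
    refine ⟨hJt, ereal_mul_ne_bot (hν i) (hKneBot _ (by simp only [mem_Ioo] at ht; linarith [hc01.2])
      (by simp only [mem_Ioo] at ht; linarith [hc01.1]) (sub_ne_zero.2 htc))⟩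
  -- J' is an m-field function
  have hNF : NFieldFun m (fun s => J s + (ν i : EReal) * K (s - x i)) := by
    refine ⟨fun t => (EReal.add_lt_top (hJtop t) (hgtop t)).ne, ⟨M + ν i * r, fun t ht => ?_⟩, ?_⟩
    · have h1 : J t ≤ (M : EReal) := hMb t ht
      have h2 : K (t - x i) ≤ (r : EReal) := by
        refine hr _ ⟨?_, ?_⟩
        · simp only [mem_Icc] at ht; linarith [hc01.2]
        · simp only [mem_Icc] at ht; linarith [hc01.1]
      have h3 : (ν i : EReal) * K (t - x i) ≤ ((ν i * r : ℝ) : EReal) := by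
        rw [EReal.coe_mul]
        exact mul_le_mul_of_nonneg_left h2 (by exact_mod_cast (hν i).le)
      calc J t + (ν i : EReal) * K (t - x i) ≤ (M : EReal) + ((ν i * r : ℝ) : EReal) :=
            add_le_add h1 h3
        _ = ((M + ν i * r : ℝ) : EReal) := by rw [EReal.coe_add]
    · by_cases hcm : x i ∈ Ioo (0:ℝ) 1
      · rcases hfin with ⟨S, hS, hcard⟩ | ⟨⟨S, hS, hcard⟩, hend⟩
        · left
          refine ⟨S.erase (x i), ?_, ?_⟩
          · intro t ht
            rw [Finset.coe_erase] at ht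
            have h1 := hS ht.1
            simp only [mem_setOf_eq] at h1 ⊢
            have htne : t ≠ x i := by simpa using ht.2
            exact ⟨h1.1, hsurv t h1.1 htne h1.2⟩
          · by_cases hxm : x i ∈ S
            · rw [Finset.card_erase_of_mem hxm]; omega
            · rw [Finset.erase_eq_of_notMem hxm]; omega
        · right
          constructor
          · refine ⟨S.erase (x i), ?_, ?_⟩
            · intro t ht
              rw [Finset.coe_erase] at ht
              have h1 := hS ht.1
              simp only [mem_setOf_eq] at h1 ⊢
              have htne : t ≠ x i := by simpa using ht.2
              exact ⟨h1.1, hsurv t h1.1 htne h1.2⟩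
            · by_cases hxm : x i ∈ S
              · rw [Finset.card_erase_of_mem hxm]; omega
              · rw [Finset.erase_eq_of_notMem hxm]; omega
          · simp only [mem_Ioo] at hcm
            rcases hend with h0 | h1
            · left
              rw [Ne, EReal.add_eq_bot_iff]
              push_neg
              exact ⟨h0, ereal_mul_ne_bot (hν i) (hKneBot _ (by linarith) (by linarith)
                (by simp; linarith))⟩
            · right
              rw [Ne, EReal.add_eq_bot_iff]
              push_neg
              exact ⟨h1, ereal_mul_ne_bot (hν i) (hKneBot _ (by linarith) (by linarith)
                (by simp; linarith))⟩
      · have hall : ∀ t ∈ Ioo (0:ℝ) 1, J t ≠ ⊥ →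
            J t + (ν i : EReal) * K (t - x i) ≠ ⊥ :=
          fun t ht h => hsurv t ht (fun he => hcm (he ▸ ht)) h
        rcases hfin with ⟨S, hS, hcard⟩ | ⟨⟨S, hS, hcard⟩, hend⟩ <;> left
        · refine ⟨S, ?_, by omega⟩
          intro t ht
          have h1 := hS ht
          simp only [mem_setOf_eq] at h1 ⊢
          exact ⟨h1.1, hall t h1.1 h1.2⟩
        · refine ⟨S, ?_, hcard⟩
          intro t ht
          have h1 := hS ht
          simp only [mem_setOf_eq] at h1 ⊢
          exact ⟨h1.1, hall t h1.1 h1.2⟩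
  -- J' is upper semicontinuous on [0,1]
  have hgc : ContinuousOn (fun t : ℝ => (ν i : EReal) * K (t - x i)) (Icc (0:ℝ) 1) := by
    apply (ereal_const_mul_continuous (ν i) (hν i).ne').comp_continuousOn
    apply (kernel_contOn hK).comp ((continuous_sub_right (x i)).continuousOn)
    intro t ht
    simp only [mem_Icc] at ht ⊢
    constructor
    · linarith [hc01.2]
    · linarith [hc01.1]
  have husc : UpperSemicontinuousOn (fun s => J s + (ν i : EReal) * K (s - x i))
      (Icc (0:ℝ) 1) :=
    hJusc.add' hgc.upperSemicontinuousOn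
      (fun t _ => EReal.continuousAt_add (Or.inl (hJtop t)) (Or.inr (hgtop t)))
  -- simplex conditions
  have hx' : closedSimplex m (x ∘ i.succAbove) :=
    ⟨fun k => hx.1 _, hx.2.comp (Fin.strictMono_succAbove i).monotone⟩
  have hy' : closedSimplex m (y ∘ i.succAbove) :=
    ⟨fun k => hy.1 _, hy.2.comp (Fin.strictMono_succAbove i).monotone⟩
  -- regularity
  have hx'r : regularNodes m (ν ∘ i.succAbove) K
      (fun s => J s + (ν i : EReal) * K (s - x i)) (x ∘ i.succAbove) := by
    intro j
    rw [hkeyx j]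
    intro hb
    exact hxr (lowIdx i j) (sup_eq_bot_iff.1 hb).1
  have hy'r : regularNodes m (ν ∘ i.succAbove) K
      (fun s => J s + (ν i : EReal) * K (s - x i)) (y ∘ i.succAbove) := by
    intro j
    rw [hkeyy j]
    intro hb
    exact hyr (lowIdx i j) (sup_eq_bot_iff.1 hb).1
  -- distinctness
  have hne' : (x ∘ i.succAbove) ≠ (y ∘ i.succAbove) := by
    obtain ⟨k, hk⟩ := Function.ne_iff.1 hne
    have hki : k ≠ i := fun h => hk (by rw [h, hshare])
    obtain ⟨k', hk'⟩ := Fin.exists_succAbove_eq hki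
    refine Function.ne_iff.2 ⟨k', ?_⟩
    simpa [Function.comp_apply, hk'] using hk
  -- apply the induction hypothesis
  obtain ⟨a, b, hab1, hab2⟩ := H (fun s => J s + (ν i : EReal) * K (s - x i)) hNF husc
    (ν ∘ i.succAbove) (fun k => hν _) (x ∘ i.succAbove) (y ∘ i.succAbove) hx' hy'
    hx'r hy'r hne'
  have hab1' : intMax m (ν ∘ i.succAbove) K (fun s => J s + (ν i : EReal) * K (s - x i))
        (x ∘ i.succAbove) a
      < intMax m (ν ∘ i.succAbove) K (fun s => J s + (ν i : EReal) * K (s - x i))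
        (y ∘ i.succAbove) a := hab1
  have hab2' : intMax m (ν ∘ i.succAbove) K (fun s => J s + (ν i : EReal) * K (s - x i))
        (y ∘ i.succAbove) b
      < intMax m (ν ∘ i.succAbove) K (fun s => J s + (ν i : EReal) * K (s - x i))
        (x ∘ i.succAbove) b := hab2
  rw [hkeyx a, hkeyy a] at hab1'
  rw [hkeyx b, hkeyy b] at hab2'
  rcases sup_lt_sup_ereal hab1' with h1 | h1 <;> rcases sup_lt_sup_ereal hab2' with h2 | h2
  · exact ⟨lowIdx i a, lowIdx i b, h1, h2⟩
  · exact ⟨lowIdx i a, highIdx i b, h1, h2⟩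
  · exact ⟨highIdx i a, lowIdx i b, h1, h2⟩
  · exact ⟨highIdx i a, highIdx i b, h1, h2⟩
end
end

section
/- For K(t) = log|t|, n = 1, ν₁ = 1, and the upper semicontinuous field function J with J(t) = -∞ for t < 2/3 and J(t) = 0 for t ≥ 2/3, the nodes x = 1/3 and y = 2/3 satisfy m₀(x) = m₀(y) = -∞ and m₁(x) = log(2/3) > m₁(y) = log(1/3); hence m(x) ≥ m(y) coordinatewise with m(x) ≠ m(y), i.e., majorization occurs between these (singular) node systems. -/
open Set

noncomputable section

private lemma sumTrans_eval (K J : ℝ → EReal) (a : ℝ) :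
    sumTrans 1 ![1] K J ![a] = fun t => J t + K (t - a) := by
  funext t; simp [sumTrans]

private lemma intMax0_eval (K J : ℝ → EReal) (a : ℝ) :
    intMax 1 ![1] K J ![a] 0 = sSup ((fun t => J t + K (t - a)) '' Icc 0 a) := by
  rw [intMax, sumTrans_eval]; rfl

private lemma intMax1_eval (K J : ℝ → EReal) (a : ℝ) :
    intMax 1 ![1] K J ![a] 1 = sSup ((fun t => J t + K (t - a)) '' Icc a 1) := by
  rw [intMax, sumTrans_eval]; rfl

private lemma m1_eval (a : ℝ) (ha1 : a < 1) :
    sSup ((fun t => (if t < 2/3 then (⊥ : EReal) else 0) +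
        (if t - a = 0 then (⊥ : EReal) else ((Real.log |t - a| : ℝ) : EReal))) '' Icc a 1)
      = ((Real.log (1 - a) : ℝ) : EReal) := by
  apply le_antisymm
  · apply sSup_le
    rintro b ⟨t, ht, rfl⟩
    by_cases h23 : t < 2/3
    · simp [h23]
    · by_cases hne : t - a = 0
      · simp [h23, hne]
      · have hta : 0 < t - a := lt_of_le_of_ne (by linarith [ht.1]) (Ne.symm hne)
        simp only [h23, if_false, hne, if_false, zero_add]
        rw [EReal.coe_le_coe_iff, abs_of_pos hta]
        exact Real.log_le_log hta (by linarith [ht.2])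
  · apply le_sSup
    refine ⟨1, ⟨ha1.le, le_refl 1⟩, ?_⟩
    have h1 : ¬ ((1:ℝ) < 2/3) := by norm_num
    have h2 : (1:ℝ) - a ≠ 0 := by linarith
    simp only [h1, if_false, h2, if_false, zero_add]
    rw [abs_of_pos (by linarith : (0:ℝ) < 1 - a)]

/-- The example with `K(t) = log|t|` and `J = -∞` on `[0,2/3)`, `J = 0` on `[2/3,1]`:
for the singular nodes `x = 1/3`, `y = 2/3` majorization occurs:
`m₀(x) = m₀(y) = -∞`, `m₁(x) = log(2/3) > m₁(y) = log(1/3)`. -/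
theorem singular_majorization_example (K J : ℝ → EReal)
    (hK : K = fun t => if t = 0 then ⊥ else ((Real.log |t| : ℝ) : EReal))
    (hJ : J = fun t => if t < 2/3 then ⊥ else 0) :
    intMax 1 ![1] K J ![(1/3 : ℝ)] 0 = ⊥ ∧
    intMax 1 ![1] K J ![(2/3 : ℝ)] 0 = ⊥ ∧
    intMax 1 ![1] K J ![(1/3 : ℝ)] 1 = ((Real.log (2/3) : ℝ) : EReal) ∧
    intMax 1 ![1] K J ![(2/3 : ℝ)] 1 = ((Real.log (1/3) : ℝ) : EReal) ∧
    (∀ j, intMax 1 ![1] K J ![(2/3 : ℝ)] j ≤ intMax 1 ![1] K J ![(1/3 : ℝ)] j) ∧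
    intMax 1 ![1] K J ![(2/3 : ℝ)] 1 < intMax 1 ![1] K J ![(1/3 : ℝ)] 1 := by
  subst hK hJ
  have h13 : intMax 1 ![1] (fun t => if t = 0 then ⊥ else ((Real.log |t| : ℝ) : EReal))
      (fun t => if t < 2/3 then ⊥ else 0) ![(1/3 : ℝ)] 1 = ((Real.log (2/3) : ℝ) : EReal) := by
    rw [intMax1_eval]
    have h := m1_eval (1/3 : ℝ) (by norm_num)
    rw [show (1:ℝ) - 1/3 = 2/3 by norm_num] at h
    simpa using h
  have h23 : intMax 1 ![1] (fun t => if t = 0 then ⊥ else ((Real.log |t| : ℝ) : EReal))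
      (fun t => if t < 2/3 then ⊥ else 0) ![(2/3 : ℝ)] 1 = ((Real.log (1/3) : ℝ) : EReal) := by
    rw [intMax1_eval]
    have h := m1_eval (2/3 : ℝ) (by norm_num)
    rw [show (1:ℝ) - 2/3 = 1/3 by norm_num] at h
    simpa using h
  have hb13 : intMax 1 ![1] (fun t => if t = 0 then ⊥ else ((Real.log |t| : ℝ) : EReal))
      (fun t => if t < 2/3 then ⊥ else 0) ![(1/3 : ℝ)] 0 = ⊥ := by
    rw [intMax0_eval, sSup_eq_bot]
    rintro b ⟨t, ht, rfl⟩
    have : t < 2/3 := by linarith [ht.2]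
    simp [this]
  have hb23 : intMax 1 ![1] (fun t => if t = 0 then ⊥ else ((Real.log |t| : ℝ) : EReal))
      (fun t => if t < 2/3 then ⊥ else 0) ![(2/3 : ℝ)] 0 = ⊥ := by
    rw [intMax0_eval, sSup_eq_bot]
    rintro b ⟨t, ht, rfl⟩
    by_cases h : t < 2/3
    · simp [h]
    · have ht2 : t - 2/3 = 0 := by
        have := le_antisymm ht.2 (not_lt.1 h)
        rw [this]; ring
      simp [h, ht2]
  have hlt : ((Real.log (1/3) : ℝ) : EReal) < ((Real.log (2/3) : ℝ) : EReal) := by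
    rw [EReal.coe_lt_coe_iff]
    exact Real.log_lt_log (by norm_num) (by norm_num)
  refine ⟨hb13, hb23, h13, h23, ?_, ?_⟩
  · intro j
    fin_cases j
    · exact le_of_eq_of_le hb23 (le_of_le_of_eq bot_le hb13.symm)
    · exact le_of_eq_of_le h23 (le_of_le_of_eq hlt.le h13.symm)
  · rw [h13, h23]; exact hlt
end
end
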